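/- arXiv:1708.04186 — 8 statements merged into one kernel-verified Lean document; each statement's English description precedes it below -/
import Mathlib

section
/- For η > 1 and u ≥ 1, the variance of interference at a boundary point at distance u from the corner equals 2λ · (2πη Γ(η) − u^{2−2η} √π Γ(η − 1/2)) / (4 Γ(η)(η−1)). -/
/-!
Integrating out `φ` leaves the radial integral of `φ(u, r) g(r)² r`, which is `π r` on `(0, 1]`,
`π r^(1-2η)` on `(1, u]` and `(π - arccos (u/r)) r^(1-2η)` beyond `u`. The only nontrivial piece,
`∫_u^∞ arccos (u/r) r^q dr` with `q = 1 - 2η < -1`, is integrated by parts: both boundary terms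
vanish (`arccos 1 = 0` at `r = u`, `r^(q+1) → 0` at infinity), and the remaining integral of
`u r^(q-1) / √(1 - (u/r)²)` becomes the Beta integral `B(-q/2, 1/2)` under `x = (u/r)²`.
-/

open MeasureTheory Real Set Filter Topology ProbabilityTheory

section Beta

variable {a b : ℝ}

lemma ofReal_rpow_mul_one_sub_rpow {x : ℝ} (hx : x ∈ Ioo (0:ℝ) 1) :
    ((x ^ (a - 1) * (1 - x) ^ (b - 1) : ℝ) : ℂ)
      = (x : ℂ) ^ ((a : ℂ) - 1) * (1 - (x : ℂ)) ^ ((b : ℂ) - 1) := by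
  push_cast
  rw [Complex.ofReal_cpow hx.1.le, Complex.ofReal_cpow (by linarith [hx.2])]
  push_cast
  ring

lemma integrableOn_rpow_mul_one_sub_rpow (ha : 0 < a) (hb : 0 < b) :
    IntegrableOn (fun x : ℝ ↦ x ^ (a - 1) * (1 - x) ^ (b - 1)) (Ioo 0 1) := by
  have h := Complex.betaIntegral_convergent (u := a) (v := b) (by simpa) (by simpa)
  rw [intervalIntegrable_iff_integrableOn_Ioo_of_le zero_le_one] at h
  refine IntegrableOn.congr_fun (Integrable.re h) (fun x hx ↦ ?_) measurableSet_Ioo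
  simp [← ofReal_rpow_mul_one_sub_rpow hx]

lemma integral_rpow_mul_one_sub_rpow (ha : 0 < a) (hb : 0 < b) :
    ∫ x in Ioo (0:ℝ) 1, x ^ (a - 1) * (1 - x) ^ (b - 1) = beta a b := by
  have h : Complex.betaIntegral a b
      = ((∫ x in Ioo (0:ℝ) 1, x ^ (a - 1) * (1 - x) ^ (b - 1) : ℝ) : ℂ) := by
    rw [Complex.betaIntegral, intervalIntegral.integral_of_le zero_le_one,
      integral_Ioc_eq_integral_Ioo, ← integral_complex_ofReal]
    exact setIntegral_congr_fun measurableSet_Ioo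
      fun x hx ↦ (ofReal_rpow_mul_one_sub_rpow hx).symm
  rw [beta_eq_betaIntegralReal a b ha hb, h, Complex.ofReal_re]

end Beta

section Substitution

variable {u : ℝ}

lemma image_div_sq_Ioi (hu : 0 < u) : (fun r ↦ (u / r) ^ 2) '' Ioi u = Ioo 0 1 := by
  ext x
  constructor
  · rintro ⟨r, hr, rfl⟩
    have hr0 : 0 < r := hu.trans hr
    have : u / r < 1 := (div_lt_one hr0).mpr hr
    exact ⟨by positivity, by nlinarith [div_pos hu hr0]⟩
  · rintro ⟨hx0, hx1⟩
    have hs : 0 < √x := sqrt_pos.mpr hx0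
    refine ⟨u / √x, ?_, ?_⟩
    · have : √x < 1 := (sqrt_lt' one_pos).mpr (by simpa using hx1)
      exact (lt_div_iff₀ hs).mpr (by nlinarith)
    · simp only
      rw [div_div_cancel₀ hu.ne', sq_sqrt hx0.le]

lemma injOn_div_sq_Ioi (hu : 0 < u) : InjOn (fun r ↦ (u / r) ^ 2) (Ioi u) := by
  intro r hr s hs h
  have hr0 : 0 < r := hu.trans hr
  have hs0 : 0 < s := hu.trans hs
  have := (pow_left_inj₀ (div_pos hu hr0).le (div_pos hu hs0).le two_ne_zero).mp h
  rw [div_eq_div_iff hr0.ne' hs0.ne'] at this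
  nlinarith

lemma hasDerivAt_div_sq {r : ℝ} (hr : r ≠ 0) :
    HasDerivAt (fun r ↦ (u / r) ^ 2) (-(2 * u ^ 2 / r ^ 3)) r := by
  refine (((hasDerivAt_inv hr).const_mul u).pow 2).congr_deriv ?_
  norm_num
  field_simp

lemma hasDerivWithinAt_div_sq (hu : 0 < u) :
    ∀ r ∈ Ioi u, HasDerivWithinAt (fun r ↦ (u / r) ^ 2) (-(2 * u ^ 2 / r ^ 3)) (Ioi u) r :=
  fun _ hr ↦ (hasDerivAt_div_sq (hu.trans hr).ne').hasDerivWithinAt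

lemma integrableOn_Ioi_comp_div_sq_iff (hu : 0 < u) (g : ℝ → ℝ) :
    IntegrableOn (fun r ↦ 2 * u ^ 2 / r ^ 3 * g ((u / r) ^ 2)) (Ioi u) ↔
      IntegrableOn g (Ioo 0 1) := by
  rw [← image_div_sq_Ioi hu, integrableOn_image_iff_integrableOn_abs_deriv_smul
    measurableSet_Ioi (hasDerivWithinAt_div_sq hu) (injOn_div_sq_Ioi hu)]
  refine integrableOn_congr_fun (fun r hr ↦ ?_) measurableSet_Ioi
  have : 0 < r := hu.trans hr
  rw [smul_eq_mul, abs_neg, abs_of_pos (by positivity)]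

lemma integral_Ioi_comp_div_sq (hu : 0 < u) (g : ℝ → ℝ) :
    ∫ r in Ioi u, 2 * u ^ 2 / r ^ 3 * g ((u / r) ^ 2) = ∫ x in Ioo 0 1, g x := by
  rw [← image_div_sq_Ioi hu, integral_image_eq_integral_abs_deriv_smul
    measurableSet_Ioi (hasDerivWithinAt_div_sq hu) (injOn_div_sq_Ioi hu)]
  refine setIntegral_congr_fun measurableSet_Ioi (fun r hr ↦ ?_)
  have : 0 < r := hu.trans hr
  rw [smul_eq_mul, abs_neg, abs_of_pos (by positivity)]

end Substitution

section Arccos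

variable {u : ℝ}

lemma hasDerivAt_arccos_div (hu : 0 < u) {r : ℝ} (hr : u < r) :
    HasDerivAt (fun r ↦ arccos (u / r)) (u / (r ^ 2 * √(1 - (u / r) ^ 2))) r := by
  have hr0 : 0 < r := hu.trans hr
  have hlt : u / r < 1 := (div_lt_one hr0).mpr hr
  have hgt : -1 < u / r := by linarith [div_pos hu hr0]
  have hs : 0 < √(1 - (u / r) ^ 2) := sqrt_pos.mpr (by nlinarith)
  refine ((hasDerivAt_arccos hgt.ne' hlt.ne).comp r
    ((hasDerivAt_inv hr0.ne').const_mul u)).congr_deriv ?_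
  field_simp

lemma integrableOn_Ioi_arccos_div_mul_rpow (hu : 0 < u) {q : ℝ} (hq : q < -1) :
    IntegrableOn (fun r ↦ arccos (u / r) * r ^ q) (Ioi u) := by
  refine (integrableOn_Ioi_rpow_of_lt hq hu).bdd_mul (c := π) ?_ ?_
  · exact (continuous_arccos.comp_continuousOn (continuousOn_const.div continuousOn_id
      fun r hr ↦ (hu.trans hr).ne')).aestronglyMeasurable measurableSet_Ioi
  · exact Filter.Eventually.of_forall fun r ↦ by
      rw [norm_of_nonneg (arccos_nonneg _)]; exact arccos_le_pi _

lemma arccos_div_deriv_mul_rpow_eq (hu : 0 < u) {q r : ℝ} (hq : q + 1 ≠ 0) (hr : u < r) :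
    u / (r ^ 2 * √(1 - (u / r) ^ 2)) * (r ^ (q + 1) / (q + 1))
      = u ^ (q + 1) / (2 * (q + 1)) * (2 * u ^ 2 / r ^ 3 *
          (((u / r) ^ 2) ^ (-q / 2 - 1) * (1 - (u / r) ^ 2) ^ ((1:ℝ) / 2 - 1))) := by
  have hr0 : 0 < r := hu.trans hr
  have hx : 0 < 1 - (u / r) ^ 2 := by
    have : u / r < 1 := (div_lt_one hr0).mpr hr
    nlinarith [div_pos hu hr0]
  have hsqrt : (1 - (u / r) ^ 2) ^ ((1:ℝ) / 2 - 1) = (√(1 - (u / r) ^ 2))⁻¹ := by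
    rw [sqrt_eq_rpow, ← rpow_neg hx.le]; norm_num
  have hpow : ((u / r) ^ 2) ^ (-q / 2 - 1) = r ^ (q + 1) * r / (u ^ (q + 1) * u) := by
    rw [← rpow_natCast, ← rpow_mul (div_pos hu hr0).le,
      show ((2:ℕ):ℝ) * (-q / 2 - 1) = -(q + 1 + 1) by push_cast; ring,
      rpow_neg (div_pos hu hr0).le, div_rpow hu.le hr0.le, rpow_add_one hu.ne',
      rpow_add_one hr0.ne', inv_div]
  rw [hsqrt, hpow]
  field_simp

lemma integral_Ioi_arccos_div_mul_rpow (hu : 0 < u) {q : ℝ} (hq : q < -1) :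
    ∫ r in Ioi u, arccos (u / r) * r ^ q
      = -(u ^ (q + 1) / (2 * (q + 1)) * beta (-q / 2) (1 / 2)) := by
  have hq1 : q + 1 ≠ 0 := by linarith
  set V : ℝ → ℝ := fun r ↦ r ^ (q + 1) / (q + 1)
  set β : ℝ → ℝ := fun x ↦ x ^ (-q / 2 - 1) * (1 - x) ^ ((1:ℝ) / 2 - 1)
  have hV : ∀ r ∈ Ioi u, HasDerivAt V (r ^ q) r := fun r hr ↦ by
    simpa [V, hq1] using
      (hasDerivAt_rpow_const (p := q + 1) (Or.inl (hu.trans hr).ne')).div_const (q + 1)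
  have hEq : EqOn (fun r ↦ u / (r ^ 2 * √(1 - (u / r) ^ 2)) * V r)
      (fun r ↦ u ^ (q + 1) / (2 * (q + 1)) * (2 * u ^ 2 / r ^ 3 * β ((u / r) ^ 2))) (Ioi u) :=
    fun _ hr ↦ arccos_div_deriv_mul_rpow_eq hu hq1 hr
  have hβ : IntegrableOn β (Ioo 0 1) :=
    integrableOn_rpow_mul_one_sub_rpow (by linarith) one_half_pos
  have hderivV : IntegrableOn (fun r ↦ u / (r ^ 2 * √(1 - (u / r) ^ 2)) * V r) (Ioi u) :=
    IntegrableOn.congr_fun (((integrableOn_Ioi_comp_div_sq_iff hu β).mpr hβ).const_mul _)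
      hEq.symm measurableSet_Ioi
  have h_zero : Tendsto ((fun r ↦ arccos (u / r)) * V) (𝓝[>] u) (𝓝 0) := by
    have hc : ContinuousAt ((fun r ↦ arccos (u / r)) * V) u :=
      (continuous_arccos.continuousAt.comp (continuousAt_const.div continuousAt_id hu.ne')).mul
        ((continuousAt_rpow_const u _ (Or.inl hu.ne')).div_const (q + 1))
    have h0 : ((fun r ↦ arccos (u / r)) * V) u = 0 := by simp [div_self hu.ne']
    exact h0 ▸ hc.tendsto.mono_left nhdsWithin_le_nhds
  have h_infty : Tendsto ((fun r ↦ arccos (u / r)) * V) atTop (𝓝 0) := by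
    have hV0 : Tendsto V atTop (𝓝 0) := by
      simpa using (tendsto_rpow_neg_atTop (y := -(q + 1)) (by linarith)).div_const (q + 1)
    have hU0 : Tendsto (fun r ↦ arccos (u / r)) atTop (𝓝 (arccos 0)) :=
      (continuous_arccos.tendsto 0).comp (tendsto_const_nhds.div_atTop tendsto_id)
    have h := hU0.mul hV0
    rwa [mul_zero] at h
  rw [integral_Ioi_mul_deriv_eq_deriv_mul (fun r hr ↦ hasDerivAt_arccos_div hu hr) hV
    (integrableOn_Ioi_arccos_div_mul_rpow hu hq) hderivV h_zero h_infty,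
    setIntegral_congr_fun measurableSet_Ioi hEq, integral_const_mul, integral_Ioi_comp_div_sq hu,
    integral_rpow_mul_one_sub_rpow (by linarith) one_half_pos]
  ring

lemma integrableOn_Ioi_pi_sub_arccos_div_mul_rpow (hu : 0 < u) {q : ℝ} (hq : q < -1) :
    IntegrableOn (fun r ↦ (π - arccos (u / r)) * r ^ q) (Ioi u) := by
  simp_rw [sub_mul]
  exact ((integrableOn_Ioi_rpow_of_lt hq hu).const_mul π).sub
    (integrableOn_Ioi_arccos_div_mul_rpow hu hq)

lemma integral_Ioi_pi_sub_arccos_div_mul_rpow (hu : 0 < u) {q : ℝ} (hq : q < -1) :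
    ∫ r in Ioi u, (π - arccos (u / r)) * r ^ q
      = u ^ (q + 1) / (q + 1) * (beta (-q / 2) (1 / 2) / 2 - π) := by
  simp_rw [sub_mul]
  rw [integral_sub ((integrableOn_Ioi_rpow_of_lt hq hu).const_mul π)
    (integrableOn_Ioi_arccos_div_mul_rpow hu hq), integral_const_mul,
    integral_Ioi_rpow_of_lt hq hu, integral_Ioi_arccos_div_mul_rpow hu hq]
  have : q + 1 ≠ 0 := by linarith
  field_simp
  ring

end Arccos

lemma integral_Ioi_eq_integral_Ioc_add_integral_Ioc_add_integral_Ioi {f : ℝ → ℝ} {a b c : ℝ}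
    (hab : a ≤ b) (hbc : b ≤ c) (h₁ : IntegrableOn f (Ioc a b)) (h₂ : IntegrableOn f (Ioc b c))
    (h₃ : IntegrableOn f (Ioi c)) :
    ∫ x in Ioi a, f x = (∫ x in Ioc a b, f x) + (∫ x in Ioc b c, f x) + ∫ x in Ioi c, f x := by
  rw [← intervalIntegral.integral_of_le hab, ← intervalIntegral.integral_of_le hbc,
    intervalIntegral.integral_add_adjacent_intervals
      ((intervalIntegrable_iff_integrableOn_Ioc_of_le hab).mpr h₁)
      ((intervalIntegrable_iff_integrableOn_Ioc_of_le hbc).mpr h₂),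
    intervalIntegral.integral_interval_add_Ioi' _ h₃]
  exact (intervalIntegrable_iff_integrableOn_Ioc_of_le (hab.trans hbc)).mpr
    (Ioc_union_Ioc_eq_Ioc hab hbc ▸ h₁.union h₂)

/-- `boundaryAngle u r` is `φ(u, r)` and `pathLoss η r` is `g(r)`. -/
noncomputable def boundaryAngle (u r : ℝ) : ℝ := if r ≤ u then π else π - arccos (u / r)

noncomputable def pathLoss (η r : ℝ) : ℝ := min 1 (r ^ (-η))

section Radial

variable {η u r : ℝ}

lemma boundaryAngle_nonneg : 0 ≤ boundaryAngle u r := by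
  unfold boundaryAngle
  split_ifs
  · exact pi_pos.le
  · exact sub_nonneg.mpr (arccos_le_pi _)

lemma pathLoss_sq_mul_self_of_le_one (hη : 0 ≤ η) (hr₀ : 0 < r) (hr₁ : r ≤ 1) :
    pathLoss η r ^ 2 * r = r := by
  rw [pathLoss, min_eq_left (one_le_rpow_of_pos_of_le_one_of_nonpos hr₀ hr₁ (neg_nonpos.mpr hη)),
    one_pow, one_mul]

lemma pathLoss_sq_mul_self_of_one_le (hη : 0 ≤ η) (hr : 1 ≤ r) :
    pathLoss η r ^ 2 * r = r ^ (1 - 2 * η) := by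
  have hr₀ : 0 < r := one_pos.trans_le hr
  rw [pathLoss, min_eq_right (rpow_le_one_of_one_le_of_nonpos hr (neg_nonpos.mpr hη)),
    ← rpow_natCast, ← rpow_mul hr₀.le, ← rpow_add_one hr₀.ne']
  congr 1
  push_cast
  ring

lemma eqOn_boundaryAngle_mul_Ioc_zero_one (hη : 0 ≤ η) (hu : 1 ≤ u) :
    EqOn (fun r ↦ boundaryAngle u r * (pathLoss η r ^ 2 * r)) (fun r ↦ π * r) (Ioc 0 1) :=
  fun r hr ↦ by
    dsimp only
    rw [boundaryAngle, if_pos (hr.2.trans hu), pathLoss_sq_mul_self_of_le_one hη hr.1 hr.2]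

lemma eqOn_boundaryAngle_mul_Ioc_one (hη : 0 ≤ η) :
    EqOn (fun r ↦ boundaryAngle u r * (pathLoss η r ^ 2 * r)) (fun r ↦ π * r ^ (1 - 2 * η))
      (Ioc 1 u) :=
  fun r hr ↦ by
    dsimp only
    rw [boundaryAngle, if_pos hr.2, pathLoss_sq_mul_self_of_one_le hη hr.1.le]

lemma eqOn_boundaryAngle_mul_Ioi (hη : 0 ≤ η) (hu : 1 ≤ u) :
    EqOn (fun r ↦ boundaryAngle u r * (pathLoss η r ^ 2 * r))
      (fun r ↦ (π - arccos (u / r)) * r ^ (1 - 2 * η)) (Ioi u) :=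
  fun r hr ↦ by
    dsimp only
    rw [boundaryAngle, if_neg (not_le.mpr hr), pathLoss_sq_mul_self_of_one_le hη (hu.trans hr.le)]

end Radial

lemma integral_Ioi_boundaryAngle_mul_pathLoss {η u : ℝ} (hη : 1 < η) (hu : 1 ≤ u) :
    ∫ r in Ioi 0, boundaryAngle u r * (pathLoss η r ^ 2 * r)
      = (2 * π * η * Gamma η - u ^ (2 - 2 * η) * √π * Gamma (η - 1 / 2))
          / (4 * Gamma η * (η - 1)) := by
  have hη₀ : 0 ≤ η := by linarith
  have hq : 1 - 2 * η < -1 := by linarith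
  have hu₀ : 0 < u := by linarith
  have h₁ := eqOn_boundaryAngle_mul_Ioc_zero_one hη₀ hu
  have h₂ := eqOn_boundaryAngle_mul_Ioc_one (u := u) hη₀
  have h₃ := eqOn_boundaryAngle_mul_Ioi hη₀ hu
  have hrpow : IntervalIntegrable (fun r : ℝ ↦ r ^ (1 - 2 * η)) volume 1 u :=
    intervalIntegral.intervalIntegrable_rpow (Or.inr (by simp [uIcc_of_le hu]))
  rw [integral_Ioi_eq_integral_Ioc_add_integral_Ioc_add_integral_Ioi zero_le_one hu
    ((continuous_const.mul continuous_id).integrableOn_Ioc.congr_fun h₁.symm measurableSet_Ioc)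
    (((intervalIntegrable_iff_integrableOn_Ioc_of_le hu).mp (hrpow.const_mul π)).congr_fun
      h₂.symm measurableSet_Ioc)
    ((integrableOn_Ioi_pi_sub_arccos_div_mul_rpow hu₀ hq).congr_fun h₃.symm measurableSet_Ioi),
    setIntegral_congr_fun measurableSet_Ioc h₁, setIntegral_congr_fun measurableSet_Ioc h₂,
    setIntegral_congr_fun measurableSet_Ioi h₃, integral_Ioi_pi_sub_arccos_div_mul_rpow hu₀ hq,
    ← intervalIntegral.integral_of_le zero_le_one, ← intervalIntegral.integral_of_le hu,
    intervalIntegral.integral_const_mul, intervalIntegral.integral_const_mul, integral_id,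
    integral_rpow (Or.inr ⟨hq.ne, by simp [uIcc_of_le hu]⟩)]
  rw [show -(1 - 2 * η) / 2 = η - 1 / 2 by ring, beta, Gamma_one_half_eq,
    show η - 1 / 2 + 1 / 2 = η by ring, show 1 - 2 * η + 1 = 2 - 2 * η by ring, one_rpow]
  have hΓ : 0 < Gamma η := Gamma_pos_of_pos (by linarith)
  have hη1 : η - 1 ≠ 0 := by linarith
  have h1η : 1 - η ≠ 0 := by linarith
  field_simp
  ring

theorem variance_interference_boundary_closed_form_general (η lam u : ℝ) (hη : 1 < η)
    (hu : 1 ≤ u) :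
    2 * lam * ∫ r in Set.Ioi (0:ℝ),
        ∫ _φ in Set.Ioo (0:ℝ) (if r ≤ u then π else π - Real.arccos (u / r)),
          (min 1 (r ^ (-η)))^2 * r
      = 2 * lam * (2 * π * η * Real.Gamma η
            - u ^ (2 - 2 * η) * Real.sqrt π * Real.Gamma (η - 1/2))
          / (4 * Real.Gamma η * (η - 1)) := by
  have hinner (r : ℝ) : ∫ _φ in Ioo 0 (boundaryAngle u r), pathLoss η r ^ 2 * r
      = boundaryAngle u r * (pathLoss η r ^ 2 * r) := by
    rw [setIntegral_const, volume_real_Ioo_of_le boundaryAngle_nonneg, sub_zero, smul_eq_mul]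
  change 2 * lam * ∫ r in Ioi 0, ∫ _φ in Ioo 0 (boundaryAngle u r), pathLoss η r ^ 2 * r = _
  simp only [hinner]
  rw [integral_Ioi_boundaryAngle_mul_pathLoss hη hu, mul_div_assoc]

/-- Closed form for the variance of interference at a boundary point at distance u ≥ 1 from
the corner: V(u) = 2λ (2πη Γ(η) − u^{2−2η} √π Γ(η − 1/2)) / (4 Γ(η)(η−1)). -/
theorem variance_interference_boundary_closed_form (η lam u : ℝ) (hη : 1 < η) (hlam : 0 < lam)
    (hu : 1 ≤ u) :
    2 * lam * ∫ r in Set.Ioi (0:ℝ),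
        ∫ _φ in Set.Ioo (0:ℝ) (if r ≤ u then π else π - Real.arccos (u / r)),
          (min 1 (r ^ (-η)))^2 * r
      = 2 * lam * (2 * π * η * Real.Gamma η
            - u ^ (2 - 2 * η) * Real.sqrt π * Real.Gamma (η - 1/2))
          / (4 * Real.Gamma η * (η - 1)) :=
  variance_interference_boundary_closed_form_general η lam u hη hu
end

section
/- As u → ∞, the mean interference E(u) at a boundary point at distance u from the corner converges to half the mean interference in the infinite plane: lim_{u→∞} E(u) = (1/2) E_bulk, where E_bulk = λ η π / (η−2); equivalently, lim_{u→∞} E(u)/E_bulk = 1/2. -/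
open MeasureTheory Real Filter

private lemma one_le_rpow_aux {x z : ℝ} (hx : 0 < x) (hx1 : x ≤ 1) (hz : z ≤ 0) :
    1 ≤ x ^ z := by
  rw [show (1:ℝ) = x ^ (0:ℝ) by simp]
  exact Real.rpow_le_rpow_of_exponent_ge hx hx1 hz

/-- Far from the corner along the boundary, the mean interference E(u) converges to half
the bulk mean interference E_bulk = ληπ/(η−2), i.e. lim_{u→∞} E(u)/E_bulk = 1/2. -/
theorem mean_interference_boundary_limit (η lam : ℝ) (hη : 2 < η) (hlam : 0 < lam) :
    Tendsto
      (fun u : ℝ =>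
        (lam * ∫ r in Set.Ioi (0:ℝ),
            ∫ _φ in Set.Ioo (0:ℝ) (if r ≤ u then π else π - Real.arccos (u / r)),
              (min 1 (r ^ (-η))) * r)
          / (lam * η * π / (η - 2)))
      atTop (nhds (1/2)) := by
  have hη2 : (0:ℝ) < η - 2 := by linarith
  set c : ℝ → ℝ := fun r => min 1 (r ^ (-η)) * r with hc
  -- nonnegativity and bound of the angle
  have hΦ0 : ∀ u r : ℝ, 0 ≤ (if r ≤ u then π else π - Real.arccos (u / r)) := by
    intro u r
    split
    · exact Real.pi_nonneg
    · linarith [Real.arccos_le_pi (u / r)]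
  have hΦπ : ∀ u r : ℝ, (if r ≤ u then π else π - Real.arccos (u / r)) ≤ π := by
    intro u r
    split
    · exact le_rfl
    · linarith [Real.arccos_nonneg (u / r)]
  -- the inner integral is just (angle) * c r
  have hinner : ∀ u r : ℝ,
      (∫ _φ in Set.Ioo (0:ℝ) (if r ≤ u then π else π - Real.arccos (u / r)),
        (min 1 (r ^ (-η))) * r)
      = (if r ≤ u then π else π - Real.arccos (u / r)) * c r := by
    intro u r
    rw [setIntegral_const, Real.volume_real_Ioo_of_le (hΦ0 u r), sub_zero,
      smul_eq_mul]
  -- nonnegativity of c on Ioi 0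
  have hc0 : ∀ r : ℝ, 0 < r → 0 ≤ c r := by
    intro r hr
    exact mul_nonneg (le_min zero_le_one (Real.rpow_nonneg hr.le _)) hr.le
  -- integrability of c on Ioi 0
  have hInt1 : IntegrableOn c (Set.Ioc (0:ℝ) 1) := by
    apply (intervalIntegral.intervalIntegrable_id.1).congr_fun _ measurableSet_Ioc
    intro r hr
    have h1 : 1 ≤ r ^ (-η) := one_le_rpow_aux hr.1 hr.2 (by linarith)
    simp [hc, min_eq_left h1]
  have hInt2 : IntegrableOn c (Set.Ioi (1:ℝ)) := by
    apply (integrableOn_Ioi_rpow_of_lt (a := 1 - η) (by linarith) one_pos).congr_fun _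
      measurableSet_Ioi
    intro r hr
    have hr1 : (1:ℝ) ≤ r := le_of_lt hr
    have hr0 : (0:ℝ) < r := lt_of_lt_of_le one_pos hr1
    have h1 : r ^ (-η) ≤ 1 := Real.rpow_le_one_of_one_le_of_nonpos hr1 (by linarith)
    simp only [hc, min_eq_right h1]
    rw [show (1:ℝ) - η = -η + 1 by ring, Real.rpow_add hr0, Real.rpow_one]
  have hUnion : Set.Ioc (0:ℝ) 1 ∪ Set.Ioi 1 = Set.Ioi 0 :=
    Set.Ioc_union_Ioi_eq_Ioi zero_le_one
  have hInt : IntegrableOn c (Set.Ioi (0:ℝ)) := by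
    rw [← hUnion]; exact hInt1.union hInt2
  -- value of the integral of c
  have hI : ∫ r in Set.Ioi (0:ℝ), c r = η / (2 * (η - 2)) := by
    rw [← hUnion, setIntegral_union (Set.Ioc_disjoint_Ioi le_rfl) measurableSet_Ioi hInt1 hInt2]
    have h1 : ∫ r in Set.Ioc (0:ℝ) 1, c r = 1/2 := by
      rw [setIntegral_congr_fun measurableSet_Ioc (g := fun r => r)
        (fun r hr => by
          have h1 : 1 ≤ r ^ (-η) := one_le_rpow_aux hr.1 hr.2 (by linarith)
          simp [hc, min_eq_left h1]),
        ← intervalIntegral.integral_of_le zero_le_one, integral_id]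
      norm_num
    have h2 : ∫ r in Set.Ioi (1:ℝ), c r = 1 / (η - 2) := by
      rw [setIntegral_congr_fun measurableSet_Ioi (g := fun r => r ^ (1 - η))
        (fun r hr => by
          have hr1 : (1:ℝ) ≤ r := le_of_lt hr
          have hr0 : (0:ℝ) < r := lt_of_lt_of_le one_pos hr1
          have h1 : r ^ (-η) ≤ 1 := Real.rpow_le_one_of_one_le_of_nonpos hr1 (by linarith)
          simp only [hc, min_eq_right h1]
          rw [show (1:ℝ) - η = -η + 1 by ring, Real.rpow_add hr0, Real.rpow_one]),
        integral_Ioi_rpow_of_lt (by linarith) one_pos]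
      rw [Real.one_rpow, show (1:ℝ) - η + 1 = -(η - 2) by ring, neg_div_neg_eq]
    rw [h1, h2]
    field_simp
    ring
  -- dominated convergence
  have key : Tendsto
      (fun u : ℝ => ∫ r in Set.Ioi (0:ℝ),
        (if r ≤ u then π else π - Real.arccos (u / r)) * c r)
      atTop (nhds (∫ r in Set.Ioi (0:ℝ), π * c r)) := by
    apply tendsto_integral_filter_of_dominated_convergence (fun r => π * c r)
    · filter_upwards with u
      apply Measurable.aestronglyMeasurable
      have hcm : Measurable c :=
        Measurable.mul (Measurable.min measurable_const (measurable_id.pow_const _)) measurable_id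
      refine Measurable.mul ?_ hcm
      exact Measurable.ite (measurableSet_le measurable_id measurable_const)
        measurable_const
        (measurable_const.sub (Real.continuous_arccos.measurable.comp
          (measurable_const.div measurable_id)))
    · filter_upwards with u
      rw [ae_restrict_iff' measurableSet_Ioi]
      filter_upwards with r hr
      rw [Real.norm_eq_abs, abs_mul, abs_of_nonneg (hΦ0 u r), abs_of_nonneg (hc0 r hr)]
      exact mul_le_mul_of_nonneg_right (hΦπ u r) (hc0 r hr)
    · exact hInt.const_mul π
    · filter_upwards with r
      apply tendsto_const_nhds.congr'
      filter_upwards [eventually_ge_atTop r] with u hu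
      rw [if_pos hu]
  rw [MeasureTheory.integral_const_mul] at key
  -- rewrite the original function
  have heq : ∀ u : ℝ,
      lam * (∫ r in Set.Ioi (0:ℝ),
        (if r ≤ u then π else π - Real.arccos (u / r)) * c r) / (lam * η * π / (η - 2))
      = (lam * ∫ r in Set.Ioi (0:ℝ),
            ∫ _φ in Set.Ioo (0:ℝ) (if r ≤ u then π else π - Real.arccos (u / r)),
              (min 1 (r ^ (-η))) * r)
          / (lam * η * π / (η - 2)) := by
    intro u
    congr 2
    exact setIntegral_congr_fun measurableSet_Ioi (fun r _ => (hinner u r).symm)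
  have final := ((key.const_mul lam).div_const (lam * η * π / (η - 2))).congr heq
  have hval : lam * (π * (η / (2 * (η - 2)))) / (lam * η * π / (η - 2)) = 1/2 := by
    have hπ : π ≠ 0 := Real.pi_ne_zero
    have hl : lam ≠ 0 := ne_of_gt hlam
    have hη0 : η ≠ 0 := by linarith
    have hη2' : η - 2 ≠ 0 := ne_of_gt hη2
    field_simp
  rw [hI, hval] at final
  exact final
end

section
/- For η > 1 and s_e > 0, the integral ∫_1^∞ (π/2 + u/r) · s_e r/(s_e + r^η) dr equals (π s_e)/(2(η−2)) · ₂F₁(1, (η−2)/η; (2η−2)/η; −s_e) + u·s_e^{1/η}·(π/η)/sin(π/η) − u·₂F₁(1, 1/η; (η+1)/η; −1/s_e), for η > 2. -/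
open MeasureTheory Real

/-- The Gauss hypergeometric function ₂F₁(a,b;c;z), defined through Euler's integral
representation (valid for c > b > 0 and z ∉ [1,∞), in particular for all z ≤ 0). -/
noncomputable def hyp2F1 (a b c z : ℝ) : ℝ :=
  (Real.Gamma c / (Real.Gamma b * Real.Gamma (c - b))) *
    ∫ t in Set.Ioo (0:ℝ) 1, t ^ (b - 1) * (1 - t) ^ (c - b - 1) * (1 - z * t) ^ (-a)

/-! Both hypergeometric values have parameters `(1, b, b + 1)`, for which Euler's integral is
`b ∫₀¹ t^(b-1) / (1 - z t) dt`. The substitution `t = r^(-η)` turns the first one into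
`(η - 2) ∫₁^∞ r / (s_e + r^η) dr`, and `t = r^η` turns the second one into
`∫₀¹ s_e / (s_e + r^η) dr`, the part of `∫₀^∞ s_e / (s_e + r^η) dr` missing from the `u`-term.
That complete integral scales to `s_e^(1/η) ∫₀^∞ dx / (1 + x^η)`, which the substitutions
`y = x^η` and `t = y / (1 + y)` reduce to the Beta integral `B(1/η, 1 - 1/η) = π / sin (π/η)`. -/

open Set

theorem integral_Ioo_rpow_mul_one_sub_rpow_neg {a : ℝ} (ha₀ : 0 < a) (ha₁ : a < 1) :
    ∫ t in Ioo (0:ℝ) 1, t ^ (a - 1) * (1 - t) ^ (-a) = π / Real.sin (π * a) := by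
  have hBeta : ((∫ t in Ioo (0:ℝ) 1, t ^ (a - 1) * (1 - t) ^ (-a) : ℝ) : ℂ)
      = Complex.betaIntegral a (1 - a) := by
    rw [Complex.betaIntegral, intervalIntegral.integral_of_le zero_le_one,
      integral_Ioc_eq_integral_Ioo, ← integral_complex_ofReal]
    refine setIntegral_congr_fun measurableSet_Ioo fun t ht => ?_
    push_cast
    rw [Complex.ofReal_cpow ht.1.le, Complex.ofReal_cpow (sub_nonneg.2 ht.2.le)]
    push_cast
    ring_nf
  have hGamma := Complex.Gamma_mul_Gamma_eq_betaIntegral (s := a) (t := 1 - a)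
    (by simpa using ha₀) (by simpa using ha₁)
  rw [add_sub_cancel, Complex.Gamma_one, one_mul, ← hBeta,
    show (1 - (a:ℂ)) = ((1 - a : ℝ) : ℂ) by push_cast; ring, Complex.Gamma_ofReal,
    Complex.Gamma_ofReal, ← Complex.ofReal_mul, Real.Gamma_mul_Gamma_one_sub] at hGamma
  exact_mod_cast hGamma.symm

theorem integral_Ioi_rpow_mul_inv_one_add {a : ℝ} (ha₀ : 0 < a) (ha₁ : a < 1) :
    ∫ y in Ioi (0:ℝ), y ^ (a - 1) * (1 + y)⁻¹ = π / Real.sin (π * a) := by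
  have himage : (fun y : ℝ => y / (1 + y)) '' Ioi 0 = Ioo 0 1 := by
    ext t
    constructor
    · rintro ⟨y, hy, rfl⟩
      have hy : (0:ℝ) < y := hy
      exact ⟨by positivity, (div_lt_one (by positivity)).2 (by linarith)⟩
    · rintro ⟨ht₀, ht₁⟩
      refine ⟨t / (1 - t), div_pos ht₀ (by linarith), ?_⟩
      have : 1 - t ≠ 0 := by linarith
      field_simp
      ring
  have hderiv : ∀ y ∈ Ioi (0:ℝ), HasDerivWithinAt (fun y : ℝ => y / (1 + y))
      ((1 + y) ^ 2)⁻¹ (Ioi 0) y := fun y hy => by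
    have hy : 1 + y ≠ 0 := by have : (0:ℝ) < y := hy; linarith
    refine (((hasDerivAt_id y).div ((hasDerivAt_id y).const_add 1) hy).congr_deriv
      ?_).hasDerivWithinAt
    simp only [id_eq]
    field_simp
    ring
  have hinj : InjOn (fun y : ℝ => y / (1 + y)) (Ioi 0) := fun x hx y hy hxy => by
    have hx : (0:ℝ) < x := hx
    have hy : (0:ℝ) < y := hy
    rw [div_eq_div_iff (by positivity) (by positivity)] at hxy
    linarith
  rw [← integral_Ioo_rpow_mul_one_sub_rpow_neg ha₀ ha₁, ← himage,
    integral_image_eq_integral_abs_deriv_smul measurableSet_Ioi hderiv hinj]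
  refine setIntegral_congr_fun measurableSet_Ioi fun y hy => ?_
  have hy : (0:ℝ) < y := hy
  have h1y : (0:ℝ) < 1 + y := by linarith
  rw [smul_eq_mul, abs_of_pos (by positivity), div_rpow hy.le h1y.le,
    show 1 - y / (1 + y) = (1 + y)⁻¹ by field_simp; ring, inv_rpow h1y.le, rpow_neg h1y.le,
    inv_inv, rpow_sub_one h1y.ne']
  field_simp

theorem integral_Ioi_inv_one_add_rpow {η : ℝ} (hη : 1 < η) :
    ∫ x in Ioi (0:ℝ), (1 + x ^ η)⁻¹ = (π / η) / Real.sin (π / η) := by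
  have hη₀ : 0 < η := by linarith
  have hsubst := integral_comp_rpow_Ioi_of_pos
    (g := fun y : ℝ => y ^ (1 / η - 1) * (1 + y)⁻¹) hη₀
  have hintegrand : ∀ x ∈ Ioi (0:ℝ),
      (η * x ^ (η - 1)) • ((x ^ η) ^ (1 / η - 1) * (1 + x ^ η)⁻¹) = η * (1 + x ^ η)⁻¹ :=
    fun x hx => by
      have hx : (0:ℝ) < x := hx
      rw [smul_eq_mul, ← rpow_mul hx.le, show η * (1 / η - 1) = -(η - 1) by field_simp; ring,
        rpow_neg hx.le]
      field_simp [(rpow_pos_of_pos hx (η - 1)).ne']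
  rw [setIntegral_congr_fun measurableSet_Ioi hintegrand, integral_const_mul,
    integral_Ioi_rpow_mul_inv_one_add (by positivity) ((div_lt_one hη₀).2 hη), mul_one_div]
    at hsubst
  rw [div_div, mul_comm η, ← div_div, ← hsubst, mul_div_cancel_left₀ _ hη₀.ne']

theorem integral_Ioi_div_add_rpow {c η : ℝ} (hc : 0 < c) (hη : 1 < η) :
    ∫ r in Ioi (0:ℝ), c / (c + r ^ η) = c ^ (1 / η) * ((π / η) / Real.sin (π / η)) := by
  have hscale : 0 < c ^ (1 / η) := rpow_pos_of_pos hc _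
  have hsubst := integral_comp_mul_left_Ioi (fun r : ℝ => c / (c + r ^ η)) 0 hscale
  have hintegrand : ∀ x ∈ Ioi (0:ℝ), c / (c + (c ^ (1 / η) * x) ^ η) = (1 + x ^ η)⁻¹ :=
    fun x hx => by
      rw [mul_rpow hscale.le (le_of_lt hx), ← rpow_mul hc.le, one_div_mul_cancel (by linarith),
        rpow_one]
      field_simp
  rw [mul_zero, setIntegral_congr_fun measurableSet_Ioi hintegrand,
    integral_Ioi_inv_one_add_rpow hη, smul_eq_mul] at hsubst
  rw [hsubst, ← mul_assoc, mul_inv_cancel₀ hscale.ne', one_mul]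

theorem integrableOn_Ioi_one_rpow_div_add_rpow {a c η : ℝ} (hc : 0 ≤ c) (haη : a - η < -1) :
    IntegrableOn (fun r : ℝ => r ^ a / (c + r ^ η)) (Ioi 1) := by
  have hcont : ContinuousOn (fun r : ℝ => r ^ a / (c + r ^ η)) (Ioi 1) := fun r hr => by
    have hr : (0:ℝ) < r := zero_lt_one.trans hr
    exact ((continuousAt_rpow_const r a (Or.inl hr.ne')).div
      (continuousAt_const.add (continuousAt_rpow_const r η (Or.inl hr.ne')))
      (add_pos_of_nonneg_of_pos hc (rpow_pos_of_pos hr η)).ne').continuousWithinAt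
  refine (integrableOn_Ioi_rpow_of_lt haη zero_lt_one).mono'
    (hcont.aestronglyMeasurable measurableSet_Ioi) ?_
  refine (ae_restrict_iff' measurableSet_Ioi).2 (ae_of_all _ fun r hr => ?_)
  have hr : (0:ℝ) < r := zero_lt_one.trans hr
  have hrη : 0 < r ^ η := rpow_pos_of_pos hr η
  rw [norm_of_nonneg (by positivity), rpow_sub hr]
  exact div_le_div_of_nonneg_left (by positivity) hrη (le_add_of_nonneg_left hc)

theorem integrableOn_Ioi_one_div_add_rpow {c η : ℝ} (hc : 0 ≤ c) (hη : 1 < η) :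
    IntegrableOn (fun r : ℝ => c / (c + r ^ η)) (Ioi 1) := by
  have h : IntegrableOn (fun r : ℝ => c * (r ^ (0:ℝ) / (c + r ^ η))) (Ioi 1) :=
    (integrableOn_Ioi_one_rpow_div_add_rpow hc (by linarith)).const_mul c
  exact h.congr_fun (fun r _ => by simp only [rpow_zero, mul_one_div]) measurableSet_Ioi

theorem integrableOn_Ioc_div_add_rpow {c η : ℝ} (hc : 0 < c) (hη : 0 ≤ η) :
    IntegrableOn (fun r : ℝ => c / (c + r ^ η)) (Ioc 0 1) := by
  refine (ContinuousOn.integrableOn_Icc ?_).mono_set Ioc_subset_Icc_self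
  exact continuousOn_const.div (continuousOn_const.add (continuousOn_id.rpow_const
    fun _ _ => Or.inr hη)) fun r hr => by have := rpow_nonneg hr.1 η; positivity

theorem integral_Ioo_add_integral_Ioi_div_add_rpow {c η : ℝ} (hc : 0 < c) (hη : 1 < η) :
    (∫ r in Ioo (0:ℝ) 1, c / (c + r ^ η)) + ∫ r in Ioi (1:ℝ), c / (c + r ^ η)
      = c ^ (1 / η) * ((π / η) / Real.sin (π / η)) := by
  rw [← integral_Ioi_div_add_rpow hc hη, ← Ioc_union_Ioi_eq_Ioi zero_le_one,
    setIntegral_union Ioc_disjoint_Ioi_same measurableSet_Ioi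
      (integrableOn_Ioc_div_add_rpow hc (by linarith))
      (integrableOn_Ioi_one_div_add_rpow hc.le hη), integral_Ioc_eq_integral_Ioo]

theorem hyp2F1_one_self_add_one {b : ℝ} (hb : 0 < b) (z : ℝ) :
    hyp2F1 1 b (b + 1) z = b * ∫ t in Ioo (0:ℝ) 1, t ^ (b - 1) * (1 - z * t)⁻¹ := by
  have hintegrand : ∀ t : ℝ, t ^ (b - 1) * (1 - t) ^ (b + 1 - b - 1) * (1 - z * t) ^ (-1:ℝ)
      = t ^ (b - 1) * (1 - z * t)⁻¹ := fun t => by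
    rw [show b + 1 - b - 1 = (0:ℝ) by ring, rpow_zero, mul_one, rpow_neg_one]
  rw [hyp2F1, funext hintegrand, add_sub_cancel_left, Gamma_one, Gamma_add_one hb.ne',
    mul_one, mul_div_cancel_right₀ _ (Gamma_pos_of_pos hb).ne']

theorem integral_image_rpow {p : ℝ} (hp : p ≠ 0) {s : Set ℝ} (hs : MeasurableSet s)
    (hs₀ : s ⊆ Ioi 0) (g : ℝ → ℝ) :
    ∫ t in (· ^ p) '' s, g t = ∫ r in s, |p| * r ^ (p - 1) * g (r ^ p) := by
  rw [integral_image_eq_integral_abs_deriv_smul hs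
    (fun r hr => (hasDerivAt_rpow_const (Or.inl (hs₀ hr).ne')).hasDerivWithinAt)
    ((rpow_left_injOn hp).mono (hs₀.trans Ioi_subset_Ici_self))]
  refine setIntegral_congr_fun hs fun r hr => ?_
  rw [smul_eq_mul, abs_mul, abs_of_pos (rpow_pos_of_pos (hs₀ hr) _)]

theorem rpow_image_Ioo_zero_one {p : ℝ} (hp : 0 < p) : (· ^ p) '' Ioo (0:ℝ) 1 = Ioo 0 1 := by
  ext t
  constructor
  · rintro ⟨r, ⟨hr₀, hr₁⟩, rfl⟩
    exact ⟨rpow_pos_of_pos hr₀ p, rpow_lt_one hr₀.le hr₁ hp⟩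
  · rintro ⟨ht₀, ht₁⟩
    refine ⟨t ^ p⁻¹, ⟨rpow_pos_of_pos ht₀ _, rpow_lt_one ht₀.le ht₁ (inv_pos.2 hp)⟩, ?_⟩
    simp only [← rpow_mul ht₀.le, inv_mul_cancel₀ hp.ne', rpow_one]

theorem rpow_image_Ioi_one {p : ℝ} (hp : p < 0) : (· ^ p) '' Ioi (1:ℝ) = Ioo 0 1 := by
  ext t
  constructor
  · rintro ⟨r, hr, rfl⟩
    exact ⟨rpow_pos_of_pos (zero_lt_one.trans hr) p, rpow_lt_one_of_one_lt_of_neg hr hp⟩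
  · rintro ⟨ht₀, ht₁⟩
    refine ⟨t ^ p⁻¹, one_lt_rpow_of_pos_of_lt_one_of_neg ht₀ ht₁ (inv_lt_zero.2 hp), ?_⟩
    simp only [← rpow_mul ht₀.le, inv_mul_cancel₀ hp.ne, rpow_one]

theorem hyp2F1_eq_integral_Ioi_one {c η : ℝ} (hc : 0 ≤ c) (hη : 2 < η) :
    hyp2F1 1 ((η - 2) / η) ((2 * η - 2) / η) (-c)
      = (η - 2) * ∫ r in Ioi (1:ℝ), r / (c + r ^ η) := by
  have hη₀ : 0 < η := by linarith
  have hintegrand : ∀ r ∈ Ioi (1:ℝ),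
      |-η| * r ^ (-η - 1) * ((r ^ (-η)) ^ ((η - 2) / η - 1) * (1 - -c * r ^ (-η))⁻¹)
        = η * (r / (c + r ^ η)) := fun r hr => by
    have hr : (0:ℝ) < r := zero_lt_one.trans hr
    have hD : r ^ η + c ≠ 0 := by positivity
    rw [abs_neg, abs_of_pos hη₀, ← rpow_mul hr.le,
      show -η * ((η - 2) / η - 1) = 2 by field_simp; ring, rpow_two,
      show -η - 1 = -η + -1 by ring, rpow_add hr, rpow_neg_one, rpow_neg hr.le,
      neg_mul, sub_neg_eq_add]
    field_simp
    ring
  have hsubst := integral_image_rpow (neg_ne_zero.2 hη₀.ne') measurableSet_Ioi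
    (fun r (hr : 1 < r) => zero_lt_one.trans hr)
    (fun t => t ^ ((η - 2) / η - 1) * (1 - -c * t)⁻¹)
  rw [rpow_image_Ioi_one (neg_neg_of_pos hη₀),
    setIntegral_congr_fun measurableSet_Ioi hintegrand, integral_const_mul] at hsubst
  rw [show (2 * η - 2) / η = (η - 2) / η + 1 by field_simp; ring,
    hyp2F1_one_self_add_one (div_pos (by linarith) hη₀), hsubst]
  field_simp

theorem hyp2F1_eq_integral_Ioo {c η : ℝ} (hc : 0 < c) (hη : 0 < η) :
    hyp2F1 1 (1 / η) ((η + 1) / η) (-(1 / c)) = ∫ r in Ioo (0:ℝ) 1, c / (c + r ^ η) := by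
  have hintegrand : ∀ r ∈ Ioo (0:ℝ) 1,
      |η| * r ^ (η - 1) * ((r ^ η) ^ (1 / η - 1) * (1 - -(1 / c) * r ^ η)⁻¹)
        = η * (c / (c + r ^ η)) := fun r hr => by
    have hr : 0 < r := hr.1
    have hD : r ^ η + c ≠ 0 := by positivity
    rw [abs_of_pos hη, ← rpow_mul hr.le, show η * (1 / η - 1) = -(η - 1) by field_simp; ring,
      rpow_neg hr.le, neg_mul, sub_neg_eq_add]
    field_simp [(rpow_pos_of_pos hr (η - 1)).ne']
  have hsubst := integral_image_rpow hη.ne' (measurableSet_Ioo (b := 1)) (fun r hr => hr.1)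
    (fun t => t ^ (1 / η - 1) * (1 - -(1 / c) * t)⁻¹)
  rw [rpow_image_Ioo_zero_one hη,
    setIntegral_congr_fun measurableSet_Ioo hintegrand, integral_const_mul] at hsubst
  rw [show (η + 1) / η = 1 / η + 1 by field_simp; ring, hyp2F1_one_self_add_one (by positivity),
    hsubst]
  field_simp

theorem I1_closed_form_general (η se u : ℝ) (hη : 2 < η) (hse : 0 < se) :
    ∫ r in Set.Ioi (1:ℝ), (π / 2 + u / r) * (se * r / (se + r ^ η))
      = (π * se) / (2 * (η - 2)) * hyp2F1 1 ((η - 2)/η) ((2*η - 2)/η) (-se)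
        + u * se ^ (1/η) * ((π/η) / Real.sin (π/η))
        - u * hyp2F1 1 (1/η) ((η + 1)/η) (-(1/se)) := by
  have hN : IntegrableOn (fun r : ℝ => r / (se + r ^ η)) (Ioi 1) := by
    simpa only [rpow_one] using integrableOn_Ioi_one_rpow_div_add_rpow (a := 1) hse.le
      (by linarith)
  have hB := integrableOn_Ioi_one_div_add_rpow hse.le (by linarith : 1 < η)
  have hsplit : ∀ r ∈ Ioi (1:ℝ), (π / 2 + u / r) * (se * r / (se + r ^ η))
      = π / 2 * se * (r / (se + r ^ η)) + u * (se / (se + r ^ η)) := fun r hr => by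
    have hr : (0:ℝ) < r := zero_lt_one.trans hr
    field_simp
  rw [setIntegral_congr_fun measurableSet_Ioi hsplit,
    integral_add (hN.const_mul _) (hB.const_mul _), integral_const_mul, integral_const_mul,
    hyp2F1_eq_integral_Ioi_one hse.le hη, hyp2F1_eq_integral_Ioo hse (by linarith),
    mul_assoc u, ← integral_Ioo_add_integral_Ioi_div_add_rpow hse (by linarith)]
  field_simp [sub_ne_zero.2 hη.ne']
  ring

/-- ∫_1^∞ (π/2 + u/r) · s_e r/(s_e + r^η) dr
  = (π s_e)/(2(η−2)) ₂F₁(1,(η−2)/η;(2η−2)/η;−s_e)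
    + u s_e^{1/η} (π/η)/sin(π/η) − u ₂F₁(1,1/η;(η+1)/η;−1/s_e),  for η > 2, s_e > 0. -/
theorem I1_closed_form (η se u : ℝ) (hη : 2 < η) (hse : 0 < se) (hu : 0 ≤ u) :
    ∫ r in Set.Ioi (1:ℝ), (π / 2 + u / r) * (se * r / (se + r ^ η))
      = (π * se) / (2 * (η - 2)) * hyp2F1 1 ((η - 2)/η) ((2*η - 2)/η) (-se)
        + u * se ^ (1/η) * ((π/η) / Real.sin (π/η))
        - u * hyp2F1 1 (1/η) ((η + 1)/η) (-(1/se)) :=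
  I1_closed_form_general η se u hη hse
end

section
/- In the interference-limited regime with Rayleigh fading, the success probability of a receiver at a point with angular sector φ_x of interferers satisfies: exp(−λ ∫_0^∞ ∫_0^{φ_x} [s g(r)/(1 + s g(r))] r dφ dr) = exp( −λ φ_x ( s/(2(1+s)) + s·₂F₁(1, (η−2)/η; (2η−2)/η; −s)/(η−2) ) ). -/
open MeasureTheory Real

/-!
On `(0, 1]` the pathloss is `1`, so the radial integrand is `s/(1+s) · r`, contributing
`s/(2(1+s))`. On `(1, ∞)` the substitution `r = t^(-1/η)` turns the integrand into
`(s/η) t^(b-1) (1+st)⁻¹` on `(0, 1)` with `b = (η-2)/η`, which is Euler's integral for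
`₂F₁(1, b; b+1; -s)` up to the factor `b`.
-/

open Set

theorem image_rpow_Ioo_zero_one_of_neg {p : ℝ} (hp : p < 0) :
    (fun t : ℝ => t ^ p) '' Ioo 0 1 = Ioi 1 := by
  ext r
  constructor
  · rintro ⟨t, ⟨ht0, ht1⟩, rfl⟩
    exact (one_lt_rpow_iff_of_pos ht0).mpr (Or.inr ⟨ht1, hp⟩)
  · intro (hr : 1 < r)
    have hr0 : 0 < r := one_pos.trans hr
    refine ⟨r ^ p⁻¹,
      ⟨rpow_pos_of_pos hr0 _, rpow_lt_one_of_one_lt_of_neg hr (inv_lt_zero.mpr hp)⟩, ?_⟩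
    show (r ^ p⁻¹) ^ p = r
    rw [← rpow_mul hr0.le, inv_mul_cancel₀ hp.ne, rpow_one]

section RadialIntegrand

variable {η : ℝ}

noncomputable def boundedPathloss (η r : ℝ) : ℝ := min 1 (r ^ (-η))

noncomputable def radialIntegrand (η s r : ℝ) : ℝ :=
  s * boundedPathloss η r / (1 + s * boundedPathloss η r) * r

theorem boundedPathloss_of_le_one (hη : 0 ≤ η) {r : ℝ} (hr : r ∈ Ioc 0 1) :
    boundedPathloss η r = 1 :=
  min_eq_left (one_le_rpow_of_pos_of_le_one_of_nonpos hr.1 hr.2 (neg_nonpos.mpr hη))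

theorem boundedPathloss_of_one_le (hη : 0 ≤ η) {r : ℝ} (hr : 1 ≤ r) :
    boundedPathloss η r = r ^ (-η) :=
  min_eq_right (rpow_le_one_of_one_le_of_nonpos hr (neg_nonpos.mpr hη))

theorem radialIntegrand_of_le_one (s : ℝ) (hη : 0 ≤ η) {r : ℝ} (hr : r ∈ Ioc 0 1) :
    radialIntegrand η s r = s / (1 + s) * r := by
  rw [radialIntegrand, boundedPathloss_of_le_one hη hr, mul_one]

theorem measurable_radialIntegrand (s : ℝ) : Measurable (radialIntegrand η s) := by
  unfold radialIntegrand boundedPathloss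
  fun_prop

theorem integrableOn_radialIntegrand_Ioc (s : ℝ) (hη : 0 ≤ η) :
    IntegrableOn (radialIntegrand η s) (Ioc 0 1) :=
  (continuous_const.mul continuous_id).integrableOn_Ioc.congr_fun
    (fun _ hr => (radialIntegrand_of_le_one s hη hr).symm) measurableSet_Ioc

theorem integrableOn_radialIntegrand_Ioi {s : ℝ} (hs : 0 ≤ s) (hη : 2 < η) :
    IntegrableOn (radialIntegrand η s) (Ioi 1) := by
  have hmajorant : IntegrableOn (fun r : ℝ => s * r ^ (1 - η)) (Ioi 1) :=
    (integrableOn_Ioi_rpow_of_lt (by linarith) one_pos).const_mul s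
  refine hmajorant.mono' (measurable_radialIntegrand s).aestronglyMeasurable
    ((ae_restrict_iff' measurableSet_Ioi).mpr (ae_of_all _ fun r (hr : 1 < r) => ?_))
  have hr0 : 0 < r := one_pos.trans hr
  have hg : 0 ≤ s * r ^ (-η) := mul_nonneg hs (rpow_nonneg hr0.le _)
  rw [radialIntegrand, boundedPathloss_of_one_le (by linarith) hr.le,
    norm_of_nonneg (by positivity)]
  calc s * r ^ (-η) / (1 + s * r ^ (-η)) * r ≤ s * r ^ (-η) * r := by
        gcongr
        exact div_le_self hg (le_add_of_nonneg_right hg)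
    _ = s * r ^ (1 - η) := by rw [mul_assoc, ← rpow_add_one hr0.ne', neg_add_eq_sub]

theorem setIntegral_radialIntegrand_Ioc (s : ℝ) (hη : 0 ≤ η) :
    ∫ r in Ioc (0:ℝ) 1, radialIntegrand η s r = s / (2 * (1 + s)) := by
  rw [setIntegral_congr_fun measurableSet_Ioc fun r hr => radialIntegrand_of_le_one s hη hr,
    integral_const_mul, ← intervalIntegral.integral_of_le zero_le_one, integral_id,
    mul_comm 2, ← div_div]
  ring

theorem setIntegral_radialIntegrand_Ioi (s : ℝ) (hη : 0 < η) :
    ∫ r in Ioi (1:ℝ), radialIntegrand η s r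
      = s / η * ∫ t in Ioo (0:ℝ) 1, t ^ ((η - 2) / η - 1) * (1 + s * t)⁻¹ := by
  have hp : -1 / η < 0 := div_neg_of_neg_of_pos neg_one_lt_zero hη
  have hderiv : ∀ t ∈ Ioo (0:ℝ) 1, HasDerivWithinAt (fun t : ℝ => t ^ (-1 / η))
      (-1 / η * t ^ (-1 / η - 1)) (Ioo 0 1) t := fun t ht =>
    (hasDerivAt_rpow_const (Or.inl ht.1.ne')).hasDerivWithinAt
  have hinj : InjOn (fun t : ℝ => t ^ (-1 / η)) (Ioo 0 1) :=
    (rpow_left_injOn hp.ne).mono fun t ht => ht.1.le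
  rw [← image_rpow_Ioo_zero_one_of_neg hp,
    integral_image_eq_integral_abs_deriv_smul measurableSet_Ioo hderiv hinj, ← integral_const_mul]
  refine setIntegral_congr_fun measurableSet_Ioo fun t ⟨ht0, ht1⟩ => ?_
  have hpow : (t ^ (-1 / η)) ^ (-η) = t := by
    rw [← rpow_mul ht0.le, div_mul_eq_mul_div, neg_one_mul, neg_neg, div_self hη.ne', rpow_one]
  have hexp : t ^ ((η - 2) / η - 1) = t ^ (-1 / η - 1) * t * t ^ (-1 / η) := by
    rw [← rpow_add_one ht0.ne', ← rpow_add ht0]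
    congr 1
    field_simp
    ring
  have hpos : 0 < t ^ (-1 / η - 1) := rpow_pos_of_pos ht0 _
  rw [smul_eq_mul, abs_mul, abs_of_pos hpos, abs_div, abs_neg, abs_one, abs_of_pos hη,
    radialIntegrand, boundedPathloss, hpow, min_eq_right ht1.le, hexp]
  field_simp

theorem integral_radialIntegrand {s : ℝ} (hs : 0 ≤ s) (hη : 2 < η) :
    ∫ r in Ioi (0:ℝ), radialIntegrand η s r
      = s / (2 * (1 + s)) + s / (η - 2) * hyp2F1 1 ((η - 2) / η) ((2 * η - 2) / η) (-s) := by
  have hη0 : 0 < η := by linarith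
  have hb : 0 < (η - 2) / η := div_pos (by linarith) hη0
  have hc : (2 * η - 2) / η = (η - 2) / η + 1 := by field_simp; ring
  rw [← Ioc_union_Ioi_eq_Ioi zero_le_one,
    setIntegral_union Ioc_disjoint_Ioi_same measurableSet_Ioi
      (integrableOn_radialIntegrand_Ioc s hη0.le) (integrableOn_radialIntegrand_Ioi hs hη),
    setIntegral_radialIntegrand_Ioc s hη0.le, setIntegral_radialIntegrand_Ioi s hη0, hc,
    hyp2F1_one_self_add_one hb]
  simp only [neg_mul, sub_neg_eq_add]
  have : η - 2 ≠ 0 := by linarith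
  field_simp

end RadialIntegrand

theorem success_probability_closed_form_general (η lam s phix : ℝ) (hη : 2 < η)
    (hs : 0 < s) (hphi : 0 < phix) :
    Real.exp (-(lam * ∫ r in Set.Ioi (0:ℝ), ∫ _φ in Set.Ioo (0:ℝ) phix,
        (s * min 1 (r ^ (-η)) / (1 + s * min 1 (r ^ (-η)))) * r))
      = Real.exp (-(lam * phix * (s / (2 * (1 + s))
          + s * hyp2F1 1 ((η - 2)/η) ((2*η - 2)/η) (-s) / (η - 2)))) := by
  have hangular : ∀ r, ∫ _φ in Ioo (0:ℝ) phix, radialIntegrand η s r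
      = phix * radialIntegrand η s r := fun r => by
    rw [setIntegral_const, volume_real_Ioo_of_le hphi.le, sub_zero, smul_eq_mul]
  change exp (-(lam * ∫ r in Ioi 0, ∫ _φ in Ioo 0 phix, radialIntegrand η s r)) = _
  rw [integral_congr_ae (ae_of_all _ hangular), integral_const_mul,
    integral_radialIntegrand hs.le hη]
  ring_nf

/-- Closed form of the Laplace-transform exponent of PPP shot noise with bounded pathloss
g(r) = min(1, r^{-η}) restricted to an angular sector of width φ_x:
exp(−λ ∫_0^∞ ∫_0^{φ_x} s g(r)/(1+s g(r)) r dφ dr)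
  = exp(−λ φ_x (s/(2(1+s)) + s ₂F₁(1,(η−2)/η;(2η−2)/η;−s)/(η−2))). -/
theorem success_probability_closed_form (η lam s phix : ℝ) (hη : 2 < η) (hlam : 0 < lam)
    (hs : 0 < s) (hphi : 0 < phix) (hphi2 : phix ≤ 2 * π) :
    Real.exp (-(lam * ∫ r in Set.Ioi (0:ℝ), ∫ _φ in Set.Ioo (0:ℝ) phix,
        (s * min 1 (r ^ (-η)) / (1 + s * min 1 (r ^ (-η)))) * r))
      = Real.exp (-(lam * phix * (s / (2 * (1 + s))
          + s * hyp2F1 1 ((η - 2)/η) ((2*η - 2)/η) (-s) / (η - 2)))) :=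
  success_probability_closed_form_general η lam s phix hη hs hphi
end

section
/- Let η > 2, λ > 0, 0 < c₁ < c₂. If γ*_co maximizes exp(−λ c₁ γ^{2/η}) − exp(−λ c₂ γ^{2/η}) and γ*_bu maximizes exp(−4λ c₁ γ^{2/η}) − exp(−4λ c₂ γ^{2/η}), then γ*_bu = 2^{−η} γ*_co. -/
open Real

lemma key_foc (a b p γ : ℝ) (ha : 0 < a) (hab : a < b) (hp : 0 < p) (hγ : 0 < γ)
    (h : IsMaxOn (fun x : ℝ => Real.exp (-(a * x ^ p)) - Real.exp (-(b * x ^ p))) (Set.Ioi 0) γ) :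
    (b - a) * γ ^ p = Real.log (b / a) := by
  have hb : 0 < b := ha.trans hab
  have hloc : IsLocalMax (fun x : ℝ => Real.exp (-(a * x ^ p)) - Real.exp (-(b * x ^ p))) γ :=
    h.isLocalMax (Ioi_mem_nhds hγ)
  have h1 : HasDerivAt (fun x : ℝ => x ^ p) (p * γ ^ (p - 1)) γ :=
    Real.hasDerivAt_rpow_const (Or.inl hγ.ne')
  have hA : HasDerivAt (fun x : ℝ => Real.exp (-(a * x ^ p)))
      (Real.exp (-(a * γ ^ p)) * (-(a * (p * γ ^ (p - 1))))) γ :=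
    ((h1.const_mul a).neg).exp
  have hB : HasDerivAt (fun x : ℝ => Real.exp (-(b * x ^ p)))
      (Real.exp (-(b * γ ^ p)) * (-(b * (p * γ ^ (p - 1))))) γ :=
    ((h1.const_mul b).neg).exp
  have hf := hA.sub hB
  have hzero := hloc.hasDerivAt_eq_zero hf
  have hc : 0 < p * γ ^ (p - 1) := mul_pos hp (rpow_pos_of_pos hγ _)
  have heq : a * Real.exp (-(a * γ ^ p)) = b * Real.exp (-(b * γ ^ p)) := by
    have : (a * Real.exp (-(a * γ ^ p)) - b * Real.exp (-(b * γ ^ p))) * (p * γ ^ (p - 1)) = 0 := by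
      ring_nf
      ring_nf at hzero
      linarith [hzero]
    rcases mul_eq_zero.mp this with h' | h'
    · linarith
    · exact absurd h' hc.ne'
  have hlog := congrArg Real.log heq
  rw [Real.log_mul ha.ne' (Real.exp_ne_zero _), Real.log_mul hb.ne' (Real.exp_ne_zero _),
    Real.log_exp, Real.log_exp] at hlog
  rw [Real.log_div hb.ne' ha.ne']
  linarith

/-- If γ*_co maximizes exp(−λc₁γ^{2/η}) − exp(−λc₂γ^{2/η}) over γ > 0 and γ*_bu maximizes
exp(−4λc₁γ^{2/η}) − exp(−4λc₂γ^{2/η}) over γ > 0, then γ*_bu = 2^{−η} γ*_co. -/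
theorem optimal_threshold_scaling (η lam c₁ c₂ γco γbu : ℝ) (hη : 2 < η) (hlam : 0 < lam)
    (hc₁ : 0 < c₁) (hc : c₁ < c₂) (hγco : γco ∈ Set.Ioi (0:ℝ)) (hγbu : γbu ∈ Set.Ioi (0:ℝ))
    (hco : IsMaxOn (fun γ : ℝ =>
        Real.exp (-(lam * c₁ * γ ^ (2/η))) - Real.exp (-(lam * c₂ * γ ^ (2/η))))
        (Set.Ioi 0) γco)
    (hbu : IsMaxOn (fun γ : ℝ =>
        Real.exp (-(4 * lam * c₁ * γ ^ (2/η))) - Real.exp (-(4 * lam * c₂ * γ ^ (2/η))))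
        (Set.Ioi 0) γbu) :
    γbu = (2:ℝ) ^ (-η) * γco := by
  have hη0 : (0:ℝ) < η := by linarith
  have hp : (0:ℝ) < 2/η := by positivity
  have hγco' : (0:ℝ) < γco := hγco
  have hγbu' : (0:ℝ) < γbu := hγbu
  have h1 := key_foc (lam * c₁) (lam * c₂) (2/η) γco (by positivity)
    (by nlinarith) hp hγco' hco
  have h2 := key_foc (4 * lam * c₁) (4 * lam * c₂) (2/η) γbu (by positivity)
    (by nlinarith) hp hγbu' hbu
  -- RHS equal
  have hrhs : (4 * lam * c₂) / (4 * lam * c₁) = (lam * c₂) / (lam * c₁) := by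
    field_simp
  rw [hrhs] at h2
  have ht : γco ^ (2/η) = 4 * γbu ^ (2/η) := by
    have hd : (0:ℝ) < lam * c₂ - lam * c₁ := by nlinarith
    have : (lam * c₂ - lam * c₁) * γco ^ (2/η) =
        (lam * c₂ - lam * c₁) * (4 * γbu ^ (2/η)) := by
      rw [h1, ← h2]; ring
    exact mul_left_cancel₀ hd.ne' this
  -- now solve for γbu
  have hinv : ((2:ℝ)/η) * (η/2) = 1 := by field_simp
  have e1 : γbu = (γbu ^ (2/η)) ^ (η/2) := by
    rw [← Real.rpow_mul hγbu'.le, hinv, Real.rpow_one]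
  have e2 : γco = (γco ^ (2/η)) ^ (η/2) := by
    rw [← Real.rpow_mul hγco'.le, hinv, Real.rpow_one]
  have hbpos : (0:ℝ) < γbu ^ (2/η) := rpow_pos_of_pos hγbu' _
  have : γbu ^ (2/η) = (1/4) * γco ^ (2/η) := by rw [ht]; ring
  rw [e1, this, Real.mul_rpow (by norm_num) (rpow_pos_of_pos hγco' _).le, ← e2]
  congr 1
  have h4 : ((1:ℝ)/4) = (2:ℝ) ^ (-2:ℝ) := by
    rw [Real.rpow_neg (by norm_num), Real.rpow_two]; norm_num
  rw [h4, ← Real.rpow_mul (by norm_num)]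
  ring
end

section
/- Let η > 2, λ > 0, u > 0 and 0 < c₁ < c₂, c₃ > 0. Then lim_{γ→∞} [ e^{−4c₁λγ^{2/η}} − e^{−4c₂λγ^{2/η}} ] / [ e^{−c₁λγ^{2/η}} − e^{−c₂λγ^{2/η}} e^{−c₃ u λ γ^{1/η}} ] = 0. -/
open Real Filter

lemma exp_half_le_aux (a b : ℝ) (h : Real.log 2 ≤ b - a) :
    Real.exp (-b) ≤ Real.exp (-a) / 2 := by
  rw [le_div_iff₀ (by norm_num : (0:ℝ) < 2)]
  have h2 : (2:ℝ) ≤ Real.exp (b - a) := by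
    calc (2:ℝ) = Real.exp (Real.log 2) := (Real.exp_log (by norm_num)).symm
      _ ≤ _ := Real.exp_le_exp.mpr h
  calc Real.exp (-b) * 2 ≤ Real.exp (-b) * Real.exp (b - a) :=
        mul_le_mul_of_nonneg_left h2 (Real.exp_pos _).le
    _ = Real.exp (-a) := by rw [← Real.exp_add]; ring_nf

/-- With 0 < c₁ < c₂, c₃ > 0, λ > 0, u > 0, η > 2:
lim_{γ→∞} (e^{−4c₁λγ^{2/η}} − e^{−4c₂λγ^{2/η}})
  / (e^{−c₁λγ^{2/η}} − e^{−c₂λγ^{2/η}} e^{−c₃uλγ^{1/η}}) = 0. -/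
theorem bulk_over_corner_zero_secrecy_ratio (η lam u c₁ c₂ c₃ : ℝ)
    (hη : 2 < η) (hlam : 0 < lam) (hu : 0 < u) (hc₁ : 0 < c₁) (hc : c₁ < c₂) (hc₃ : 0 < c₃) :
    Tendsto (fun γ : ℝ =>
        (Real.exp (-(4 * c₁ * lam * γ ^ (2/η))) - Real.exp (-(4 * c₂ * lam * γ ^ (2/η))))
        / (Real.exp (-(c₁ * lam * γ ^ (2/η)))
            - Real.exp (-(c₂ * lam * γ ^ (2/η))) * Real.exp (-(c₃ * u * lam * γ ^ (1/η)))))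
      atTop (nhds 0) := by
  have hη0 : (0:ℝ) < η := by linarith
  have hx : Tendsto (fun γ : ℝ => γ ^ (2/η)) atTop atTop :=
    tendsto_rpow_atTop (by positivity)
  have hg : Tendsto (fun γ : ℝ => 2 * Real.exp (-(3 * c₁ * lam * γ ^ (2/η)))) atTop (nhds 0) := by
    have h1 : Tendsto (fun γ : ℝ => 3 * c₁ * lam * γ ^ (2/η)) atTop atTop :=
      hx.const_mul_atTop (by positivity)
    have h2 : Tendsto (fun γ : ℝ => -(3 * c₁ * lam * γ ^ (2/η))) atTop atBot :=
      tendsto_neg_atBot_iff.mpr h1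
    have h3 := Real.tendsto_exp_atBot.comp h2
    have := h3.const_mul (2:ℝ)
    simpa using this
  apply squeeze_zero' ?_ ?_ hg
  · -- nonnegativity, eventually
    filter_upwards [hx.eventually_ge_atTop (Real.log 2 / ((c₂ - c₁) * lam)),
        eventually_ge_atTop (0:ℝ)] with γ hxγ hγ0
    set x := γ ^ (2/η) with hxdef
    have hx0 : 0 ≤ x := Real.rpow_nonneg hγ0 _
    have hlog : Real.log 2 ≤ c₂ * lam * x - c₁ * lam * x := by
      have hpos : 0 < (c₂ - c₁) * lam := mul_pos (by linarith) hlam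
      have := (div_le_iff₀ hpos).mp hxγ
      nlinarith
    have hN : 0 ≤ Real.exp (-(4 * c₁ * lam * x)) - Real.exp (-(4 * c₂ * lam * x)) := by
      have h4 : -(4 * c₂ * lam * x) ≤ -(4 * c₁ * lam * x) := by
        nlinarith [mul_nonneg (mul_nonneg (by linarith : (0:ℝ) ≤ 4 * (c₂ - c₁)) hlam.le) hx0]
      linarith [Real.exp_le_exp.mpr h4]
    have hE1 : Real.exp (-(c₃ * u * lam * γ ^ (1/η))) ≤ 1 := by
      apply Real.exp_le_one_iff.mpr
      have h1 : 0 ≤ γ ^ (1/η) := Real.rpow_nonneg hγ0 _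
      nlinarith [mul_nonneg (by positivity : (0:ℝ) ≤ c₃ * u * lam) h1]
    have h5 : Real.exp (-(c₂ * lam * x)) ≤ Real.exp (-(c₁ * lam * x)) / 2 :=
      exp_half_le_aux _ _ hlog
    have hD : 0 < Real.exp (-(c₁ * lam * x))
        - Real.exp (-(c₂ * lam * x)) * Real.exp (-(c₃ * u * lam * γ ^ (1/η))) := by
      nlinarith [Real.exp_pos (-(c₁ * lam * x)), Real.exp_pos (-(c₂ * lam * x))]
    exact div_nonneg hN hD.le
  · -- upper bound, eventually
    filter_upwards [hx.eventually_ge_atTop (Real.log 2 / ((c₂ - c₁) * lam)),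
        eventually_ge_atTop (0:ℝ)] with γ hxγ hγ0
    set x := γ ^ (2/η) with hxdef
    have hx0 : 0 ≤ x := Real.rpow_nonneg hγ0 _
    have hlog : Real.log 2 ≤ c₂ * lam * x - c₁ * lam * x := by
      have hpos : 0 < (c₂ - c₁) * lam := mul_pos (by linarith) hlam
      have := (div_le_iff₀ hpos).mp hxγ
      nlinarith
    have hE1 : Real.exp (-(c₃ * u * lam * γ ^ (1/η))) ≤ 1 := by
      apply Real.exp_le_one_iff.mpr
      have h1 : 0 ≤ γ ^ (1/η) := Real.rpow_nonneg hγ0 _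
      nlinarith [mul_nonneg (by positivity : (0:ℝ) ≤ c₃ * u * lam) h1]
    have h5 : Real.exp (-(c₂ * lam * x)) ≤ Real.exp (-(c₁ * lam * x)) / 2 :=
      exp_half_le_aux _ _ hlog
    have hDlow : Real.exp (-(c₁ * lam * x)) / 2 ≤ Real.exp (-(c₁ * lam * x))
        - Real.exp (-(c₂ * lam * x)) * Real.exp (-(c₃ * u * lam * γ ^ (1/η))) := by
      nlinarith [Real.exp_pos (-(c₂ * lam * x))]
    have hNup : Real.exp (-(4 * c₁ * lam * x)) - Real.exp (-(4 * c₂ * lam * x))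
        ≤ Real.exp (-(4 * c₁ * lam * x)) := by
      linarith [Real.exp_pos (-(4 * c₂ * lam * x))]
    calc (Real.exp (-(4 * c₁ * lam * x)) - Real.exp (-(4 * c₂ * lam * x)))
        / (Real.exp (-(c₁ * lam * x))
            - Real.exp (-(c₂ * lam * x)) * Real.exp (-(c₃ * u * lam * γ ^ (1/η))))
        ≤ Real.exp (-(4 * c₁ * lam * x)) / (Real.exp (-(c₁ * lam * x)) / 2) := by
          apply div_le_div₀ (Real.exp_pos _).le hNup (by positivity) hDlow
      _ = 2 * Real.exp (-(3 * c₁ * lam * x)) := by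
          rw [div_div_eq_mul_div, mul_comm, mul_div_assoc, ← Real.exp_sub]
          ring_nf
end

section
/- With X as above (Θ uniform on [0, π/2], X = |d₀e^{iΘ} − u|), if |u − d₀| < 1 < √(d₀²+u²) and u ≤ d₀ + 1 (resp. u ≥ d₀ − 1), then P(X ≤ 1) = 1 − (2/π) arctan( √( (d₀²(1+α²) − 1)² / ( (2α d₀²)² − (d₀²(1+α²) − 1)² ) ) ), where α = u/d₀. -/
open MeasureTheory Real

/-!
Since `‖d₀ e^{iθ} - u‖² = d₀² + u² - 2 d₀ u cos θ`, the event `X ≤ 1` is `cos Θ ≥ c` with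
`c = (d₀² + u² - 1) / (2 d₀ u)`, and `|u - d₀| < 1 < √(d₀² + u²)` gives `0 < c < 1`. On `[0, π/2]`
this is the interval `[0, arccos c]`, of probability `(2/π) arccos c = 1 - (2/π) arcsin c`, and
`arcsin c = arctan (c / √(1 - c²))` is the arctangent in the statement.
-/

theorem norm_ofReal_mul_exp_sub_ofReal_sq (r s θ : ℝ) :
    ‖(r : ℂ) * Complex.exp ((θ : ℂ) * Complex.I) - (s : ℂ)‖ ^ 2
      = r ^ 2 + s ^ 2 - 2 * r * s * cos θ := by
  rw [Complex.sq_norm, Complex.normSq_apply]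
  simp only [Complex.exp_mul_I, ← Complex.ofReal_cos, ← Complex.ofReal_sin, Complex.sub_re,
    Complex.sub_im, Complex.mul_re, Complex.mul_im, Complex.add_re, Complex.add_im,
    Complex.ofReal_re, Complex.ofReal_im, Complex.I_re, Complex.I_im]
  linear_combination r ^ 2 * sin_sq_add_cos_sq θ

theorem norm_ofReal_mul_exp_sub_ofReal_le_one_iff {r s : ℝ} (hrs : 0 < 2 * r * s) (θ : ℝ) :
    ‖(r : ℂ) * Complex.exp ((θ : ℂ) * Complex.I) - (s : ℂ)‖ ≤ 1
      ↔ (r ^ 2 + s ^ 2 - 1) / (2 * r * s) ≤ cos θ := by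
  rw [← pow_le_one_iff_of_nonneg (norm_nonneg _) two_ne_zero,
    norm_ofReal_mul_exp_sub_ofReal_sq, div_le_iff₀ hrs]
  constructor <;> intro h <;> linarith

theorem le_cos_iff_le_arccos {c θ : ℝ} (hc₁ : -1 ≤ c) (hc₂ : c ≤ 1) (hθ₀ : 0 ≤ θ)
    (hθπ : θ ≤ π) : c ≤ cos θ ↔ θ ≤ arccos c := by
  constructor
  · intro h
    calc θ = arccos (cos θ) := (arccos_cos hθ₀ hθπ).symm
      _ ≤ arccos c := arccos_le_arccos h
  · intro h
    calc c = cos (arccos c) := (cos_arccos hc₁ hc₂).symm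
      _ ≤ cos θ := cos_le_cos_of_nonneg_of_le_pi hθ₀ (arccos_le_pi c) h

theorem setOf_le_cos_inter_Icc_pi_div_two {c : ℝ} (hc₀ : 0 ≤ c) (hc₁ : c ≤ 1) :
    {θ | c ≤ cos θ} ∩ Set.Icc 0 (π / 2) = Set.Icc 0 (arccos c) := by
  have hπ := pi_pos
  ext θ
  simp only [Set.mem_inter_iff, Set.mem_ofPred_eq, Set.mem_Icc]
  constructor
  · rintro ⟨hcθ, hθ₀, hθπ⟩
    exact ⟨hθ₀, (le_cos_iff_le_arccos (by linarith) hc₁ hθ₀ (by linarith)).1 hcθ⟩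
  · rintro ⟨hθ₀, hθc⟩
    have hθπ : θ ≤ π / 2 := hθc.trans (arccos_le_pi_div_two.2 hc₀)
    exact ⟨(le_cos_iff_le_arccos (by linarith) hc₁ hθ₀ (by linarith)).2 hθc, hθ₀, hθπ⟩

theorem measure_le_cos_of_uniform_Icc_pi_div_two {Ω : Type*} [MeasurableSpace Ω]
    {μ : Measure Ω} {Θ : Ω → ℝ} (hΘ : Measurable Θ)
    (hunif : Measure.map Θ μ
      = (ENNReal.ofReal (2/π)) • (volume.restrict (Set.Icc (0:ℝ) (π/2))))
    {c : ℝ} (hc₀ : 0 ≤ c) (hc₁ : c ≤ 1) :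
    (μ (Θ ⁻¹' {θ | c ≤ cos θ})).toReal = 2 / π * arccos c := by
  have hmeas : MeasurableSet {θ | c ≤ cos θ} :=
    (isClosed_le continuous_const continuous_cos).measurableSet
  rw [← Measure.map_apply hΘ hmeas, hunif, Measure.smul_apply, Measure.restrict_apply hmeas,
    setOf_le_cos_inter_Icc_pi_div_two hc₀ hc₁, Real.volume_Icc, sub_zero, smul_eq_mul,
    ← ENNReal.ofReal_mul (by positivity), ENNReal.toReal_ofReal (mul_nonneg (by positivity) (arccos_nonneg c))]

theorem arcsin_div_eq_arctan_sqrt {a b : ℝ} (ha : 0 ≤ a) (hab : a < b) :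
    arcsin (a / b) = arctan √(a ^ 2 / (b ^ 2 - a ^ 2)) := by
  have hb : 0 < b := ha.trans_lt hab
  have hba : 0 < b ^ 2 - a ^ 2 := by nlinarith
  have hsqrt : √(1 - (a / b) ^ 2) = √(b ^ 2 - a ^ 2) / b := by
    rw [show 1 - (a / b) ^ 2 = (b ^ 2 - a ^ 2) / b ^ 2 by field_simp, sqrt_div hba.le,
      sqrt_sq hb.le]
  rw [arcsin_eq_arctan ⟨by linarith [div_nonneg ha hb.le], (div_lt_one hb).2 hab⟩, hsqrt,
    sqrt_div (sq_nonneg a), sqrt_sq ha]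
  have : √(b ^ 2 - a ^ 2) ≠ 0 := (sqrt_pos.2 hba).ne'
  field_simp

theorem nearfield_probability_general (Ω : Type*) [MeasurableSpace Ω] (μ : Measure Ω)
    (Θ : Ω → ℝ) (hΘ : Measurable Θ)
    (hunif : Measure.map Θ μ
      = (ENNReal.ofReal (2/π)) • (volume.restrict (Set.Icc (0:ℝ) (π/2))))
    (d₀ u : ℝ)
    (h1 : |u - d₀| < 1) (h2 : 1 < Real.sqrt (d₀^2 + u^2)) :
    (μ {ω | ‖(d₀:ℂ) * Complex.exp ((Θ ω : ℂ) * Complex.I) - (u:ℂ)‖ ≤ 1}).toReal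
      = 1 - (2/π) * Real.arctan (Real.sqrt
          ((d₀^2 * (1 + (u/d₀)^2) - 1)^2
            / ((2 * (u/d₀) * d₀^2)^2 - (d₀^2 * (1 + (u/d₀)^2) - 1)^2))) := by
  set a := d₀ ^ 2 + u ^ 2 - 1
  set b := 2 * d₀ * u
  have ha : 0 < a := by
    have := (lt_sqrt zero_le_one).1 h2
    linarith
  have hab : a < b := by
    have := abs_lt.1 h1
    nlinarith
  have hb : 0 < b := ha.trans hab
  have hd₀ : d₀ ≠ 0 := by rintro rfl; simp [b] at hb
  have hevent : {ω | ‖(d₀:ℂ) * Complex.exp ((Θ ω : ℂ) * Complex.I) - (u:ℂ)‖ ≤ 1}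
      = Θ ⁻¹' {θ | a / b ≤ cos θ} := by
    ext ω
    exact norm_ofReal_mul_exp_sub_ofReal_le_one_iff hb (Θ ω)
  have ha' : d₀ ^ 2 * (1 + (u / d₀) ^ 2) - 1 = a := by field_simp; rfl
  have hb' : 2 * (u / d₀) * d₀ ^ 2 = b := by field_simp; ring
  rw [hevent, measure_le_cos_of_uniform_Icc_pi_div_two hΘ hunif (by positivity)
      ((div_le_one hb).2 hab.le), ha', hb', arccos_eq_pi_div_two_sub_arcsin,
    arcsin_div_eq_arctan_sqrt ha.le hab]
  field_simp

/-- Near-field probability: with Θ uniform on [0, π/2], X = |d₀e^{iΘ} − u|, and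
|u − d₀| < 1 < √(d₀² + u²), one has
P(X ≤ 1) = 1 − (2/π) arctan √((d₀²(1+α²)−1)² / ((2αd₀²)² − (d₀²(1+α²)−1)²)), α = u/d₀. -/
theorem nearfield_probability (Ω : Type*) [MeasurableSpace Ω] (μ : Measure Ω)
    [IsProbabilityMeasure μ] (Θ : Ω → ℝ) (hΘ : Measurable Θ)
    (hunif : Measure.map Θ μ
      = (ENNReal.ofReal (2/π)) • (volume.restrict (Set.Icc (0:ℝ) (π/2))))
    (d₀ u : ℝ) (hd : 0 < d₀) (hu : 0 < u)
    (h1 : |u - d₀| < 1) (h2 : 1 < Real.sqrt (d₀^2 + u^2)) :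
    (μ {ω | ‖(d₀:ℂ) * Complex.exp ((Θ ω : ℂ) * Complex.I) - (u:ℂ)‖ ≤ 1}).toReal
      = 1 - (2/π) * Real.arctan (Real.sqrt
          ((d₀^2 * (1 + (u/d₀)^2) - 1)^2
            / ((2 * (u/d₀) * d₀^2)^2 - (d₀^2 * (1 + (u/d₀)^2) - 1)^2))) :=
  nearfield_probability_general Ω μ Θ hΘ hunif d₀ u h1 h2
end

section
/- Let F(γ_r, γ_e) be the joint CDF of two nonnegative random variables with joint density f, and let F_e be the marginal CDF of γ_e. Then ∫_0^∞ ∫_0^{γ_r} log₂((1+γ_r)/(1+γ_e)) f(γ_r, γ_e) dγ_e dγ_r = (1/log 2) ∫_0^∞ (F_e(γ) − F(γ, γ)) / (1 + γ) dγ. -/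
open MeasureTheory Real

open Set

lemma aux_log_int {y x : ℝ} (hy : 0 < y) (hyx : y ≤ x) :
    ∫⁻ γ in Set.Ioc y x, ENNReal.ofReal ((1+γ)⁻¹)
      = ENNReal.ofReal (Real.log ((1+x)/(1+y))) := by
  have hcont : ContinuousOn (fun γ : ℝ => (1+γ)⁻¹) (Set.Icc y x) := by
    apply ContinuousOn.inv₀ (by fun_prop)
    intro γ hγ; nlinarith [hγ.1]
  have hInt : IntegrableOn (fun γ : ℝ => (1+γ)⁻¹) (Set.Ioc y x) :=
    (hcont.integrableOn_Icc).mono_set Set.Ioc_subset_Icc_self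
  rw [← ofReal_integral_eq_lintegral_ofReal hInt]
  · congr 1
    rw [← intervalIntegral.integral_of_le hyx]
    have := intervalIntegral.integral_comp_add_left (a := y) (b := x) (fun u : ℝ => u⁻¹) 1
    rw [this, integral_inv]
    intro h
    simp only [Set.mem_uIcc] at h
    rcases h with ⟨h1, _⟩ | ⟨_, h2⟩ <;> nlinarith
  · filter_upwards [ae_restrict_mem measurableSet_Ioc] with γ hγ
    have : (0:ℝ) < 1 + γ := by nlinarith [hγ.1]
    positivity

lemma aux_slice {G : ℝ → ℝ → ℝ} {x y : ℝ} (hG : 0 ≤ G x y) (hy : 0 < y) (hyx : y ≤ x) :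
    ∫⁻ γ in Set.Ioc y x, ENNReal.ofReal (G x y * (1+γ)⁻¹)
      = ENNReal.ofReal (Real.log 2) *
        ENNReal.ofReal (Real.logb 2 ((1+x)/(1+y)) * G x y) := by
  simp_rw [ENNReal.ofReal_mul hG]
  rw [lintegral_const_mul' _ _ ENNReal.ofReal_ne_top, aux_log_int hy hyx,
    ← ENNReal.ofReal_mul hG, ← ENNReal.ofReal_mul (Real.log_pos one_lt_two).le]
  congr 1
  have h2 : Real.log 2 ≠ 0 := (Real.log_pos one_lt_two).ne'
  rw [Real.logb]
  field_simp


theorem secrecy_main (G : ℝ → ℝ → ℝ)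
    (hGm : Measurable fun p : ℝ × ℝ => G p.1 p.2)
    (hG_nonneg : ∀ x y, 0 ≤ G x y)
    (hG_supp : ∀ x y, x < 0 ∨ y < 0 → G x y = 0)
    (hG_int : Integrable (fun p : ℝ × ℝ => G p.1 p.2))
    (hsec_int : IntegrableOn (fun p : ℝ × ℝ => Real.logb 2 ((1 + p.1) / (1 + p.2)) * G p.1 p.2)
      {p : ℝ × ℝ | 0 ≤ p.2 ∧ p.2 ≤ p.1}) :
    (∫ γr in Set.Ioi (0:ℝ), ∫ γe in Set.Ioc (0:ℝ) γr,
        Real.logb 2 ((1 + γr) / (1 + γe)) * G γr γe)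
      = (1 / Real.log 2) * ∫ γ in Set.Ioi (0:ℝ),
          ((∫ y in Set.Iic γ, ∫ x : ℝ, G x y) - (∫ y in Set.Iic γ, ∫ x in Set.Iic γ, G x y))
            / (1 + γ) := by
  -- basic measurability
  have hGsec : ∀ x, Measurable fun y => G x y :=
    fun x => hGm.comp (measurable_const.prodMk measurable_id)
  have hGsec' : ∀ y, Measurable fun x => G x y :=
    fun y => hGm.comp (measurable_id.prodMk measurable_const)
  have hlogb : Measurable fun p : ℝ × ℝ => Real.logb 2 ((1 + p.1) / (1 + p.2)) := by
    apply Measurable.div _ measurable_const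
    exact (Real.measurable_log.comp
      (((measurable_const.add measurable_fst)).div ((measurable_const.add measurable_snd))))
  -- the two kernels
  set Φ : ℝ × ℝ × ℝ → ENNReal :=
    fun q => Set.indicator {q : ℝ × ℝ × ℝ | 0 < q.2.1 ∧ q.2.1 < q.2.2 ∧ q.2.2 ≤ q.1}
      (fun q => ENNReal.ofReal (G q.1 q.2.1 * (1 + q.2.2)⁻¹)) q with hΦdef
  set Φ' : ℝ × ℝ × ℝ → ENNReal :=
    fun q => Set.indicator {q : ℝ × ℝ × ℝ | q.2.1 ≤ q.2.2 ∧ 0 < q.2.2 ∧ q.2.2 < q.1}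
      (fun q => ENNReal.ofReal (G q.1 q.2.1 * (1 + q.2.2)⁻¹)) q with hΦ'def
  have m21 : Measurable fun q : ℝ × ℝ × ℝ => q.2.1 := measurable_snd.fst
  have m22 : Measurable fun q : ℝ × ℝ × ℝ => q.2.2 := measurable_snd.snd
  have hSmeas : MeasurableSet {q : ℝ × ℝ × ℝ | 0 < q.2.1 ∧ q.2.1 < q.2.2 ∧ q.2.2 ≤ q.1} := by
    simp only [Set.setOf_and]
    exact (measurableSet_lt measurable_const m21).inter
      ((measurableSet_lt m21 m22).inter (measurableSet_le m22 measurable_fst))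
  have hS'meas : MeasurableSet {q : ℝ × ℝ × ℝ | q.2.1 ≤ q.2.2 ∧ 0 < q.2.2 ∧ q.2.2 < q.1} := by
    simp only [Set.setOf_and]
    exact (measurableSet_le m21 m22).inter
      ((measurableSet_lt measurable_const m22).inter (measurableSet_lt m22 measurable_fst))
  have hker : Measurable fun q : ℝ × ℝ × ℝ => ENNReal.ofReal (G q.1 q.2.1 * (1 + q.2.2)⁻¹) := by
    apply ENNReal.measurable_ofReal.comp
    apply Measurable.mul
    · exact hGm.comp (measurable_fst.prodMk (measurable_fst.comp measurable_snd))
    · exact ((measurable_const.add (measurable_snd.comp measurable_snd))).inv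
  have hΦm : Measurable Φ := hker.indicator hSmeas
  have hΦ'm : Measurable Φ' := hker.indicator hS'meas
  set g : ℝ → ℝ → ℝ := fun x y => Real.logb 2 ((1+x)/(1+y)) * G x y with hgdef
  set B : ℝ → ENNReal := fun x => ∫⁻ y in Set.Ioc 0 x, ENNReal.ofReal (g x y) with hBdef
  have hL1 : ∀ x : ℝ, (∫ y in Set.Ioc 0 x, g x y) = (B x).toReal := by
    intro x
    rw [hBdef, integral_eq_lintegral_of_nonneg_ae]
    · filter_upwards [ae_restrict_mem measurableSet_Ioc] with y hy
      refine mul_nonneg (Real.logb_nonneg one_lt_two ?_) (hG_nonneg x y)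
      rw [le_div_iff₀ (by linarith [hy.1])]
      linarith [hy.1, hy.2]
    · exact ((hlogb.comp (measurable_const.prodMk measurable_id)).mul
        (hGsec x)).aestronglyMeasurable
  have hL2 : ∀ x y : ℝ, (∫⁻ γ, Φ (x, y, γ))
      = Set.indicator (Set.Ioc 0 x) (fun y => ENNReal.ofReal (Real.log 2 * g x y)) y := by
    intro x y
    by_cases hy : 0 < y
    · by_cases hyx : y ≤ x
      · have h1 : (fun γ => Φ (x, y, γ))
            = Set.indicator (Set.Ioc y x) (fun γ => ENNReal.ofReal (G x y * (1+γ)⁻¹)) := by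
          funext γ
          simp only [hΦdef, Set.indicator_apply, Set.mem_setOf_eq, Set.mem_Ioc, hy, true_and]
        rw [h1, lintegral_indicator measurableSet_Ioc,
          aux_slice (hG_nonneg x y) hy hyx,
          Set.indicator_of_mem (Set.mem_Ioc.mpr ⟨hy, hyx⟩),
          ENNReal.ofReal_mul (Real.log_nonneg one_le_two)]
      · have h1 : ∀ γ : ℝ, Φ (x, y, γ) = 0 := by
          intro γ
          simp only [hΦdef]
          exact Set.indicator_of_notMem (by rintro ⟨h1, h2, h3⟩; exact hyx (by linarith)) _
        simp only [h1, lintegral_zero,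
          Set.indicator_of_notMem (fun h => hyx (Set.mem_Ioc.mp h).2)]
    · have h1 : ∀ γ : ℝ, Φ (x, y, γ) = 0 := by
        intro γ
        simp only [hΦdef]
        exact Set.indicator_of_notMem (by rintro ⟨h1, h2, h3⟩; exact hy h1) _
      simp only [h1, lintegral_zero,
        Set.indicator_of_notMem (fun h => hy (Set.mem_Ioc.mp h).1)]
  have hL3 : ∀ x : ℝ, (∫⁻ y, ∫⁻ γ, Φ (x, y, γ)) = ENNReal.ofReal (Real.log 2) * B x := by
    intro x
    simp_rw [hL2 x]
    rw [lintegral_indicator measurableSet_Ioc]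
    simp_rw [ENNReal.ofReal_mul (Real.log_nonneg one_le_two)]
    rw [lintegral_const_mul' _ _ ENNReal.ofReal_ne_top, hBdef]
  have hBzero : ∀ x : ℝ, x ≤ 0 → B x = 0 := by
    intro x hx
    rw [hBdef]
    simp [Set.Ioc_eq_empty (fun h : (0:ℝ) < x => absurd hx (not_le.mpr h))]
  have hT1 : (∫⁻ x, ∫⁻ y, ∫⁻ γ, Φ (x, y, γ))
      = ENNReal.ofReal (Real.log 2) * ∫⁻ x in Set.Ioi 0, B x := by
    simp_rw [hL3]
    rw [← lintegral_indicator measurableSet_Ioi, ← lintegral_const_mul' _ _ ENNReal.ofReal_ne_top]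
    refine lintegral_congr fun x => ?_
    by_cases hx : x ∈ Set.Ioi (0:ℝ)
    · rw [Set.indicator_of_mem hx]
    · rw [Set.indicator_of_notMem hx, hBzero x (le_of_not_gt (by simpa using hx)), mul_zero]
  -- measurability of B and finiteness
  have hS2d : MeasurableSet {p : ℝ × ℝ | 0 < p.2 ∧ p.2 ≤ p.1} := by
    simp only [Set.setOf_and]
    exact (measurableSet_lt measurable_const measurable_snd).inter
      (measurableSet_le measurable_snd measurable_fst)
  have hpair : Measurable fun p : ℝ × ℝ =>
      Set.indicator {p : ℝ × ℝ | 0 < p.2 ∧ p.2 ≤ p.1}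
        (fun p => ENNReal.ofReal (g p.1 p.2)) p := by
    refine Measurable.indicator ?_ hS2d
    exact ENNReal.measurable_ofReal.comp (hlogb.mul hGm)
  have hB' : ∀ x : ℝ, B x = ∫⁻ y, Set.indicator {p : ℝ × ℝ | 0 < p.2 ∧ p.2 ≤ p.1}
      (fun p => ENNReal.ofReal (g p.1 p.2)) (x, y) := by
    intro x
    simp only [hBdef]
    rw [← lintegral_indicator measurableSet_Ioc]
    refine lintegral_congr fun y => ?_
    simp only [Set.indicator_apply, Set.mem_Ioc, Set.mem_setOf_eq]
  have hBm : Measurable B := by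
    rw [show B = _ from funext hB']
    exact hpair.lintegral_prod_right'
  have hBfin : (∫⁻ x in Set.Ioi 0, B x) < ⊤ := by
    have e1 : (∫⁻ x in Set.Ioi 0, B x) = ∫⁻ x, B x := by
      rw [← lintegral_indicator measurableSet_Ioi]
      refine lintegral_congr fun x => ?_
      by_cases hx : x ∈ Set.Ioi (0:ℝ)
      · rw [Set.indicator_of_mem hx]
      · rw [Set.indicator_of_notMem hx, hBzero x (le_of_not_gt (by simpa using hx))]
    have e2 : (∫⁻ x, B x) = ∫⁻ p in {p : ℝ × ℝ | 0 < p.2 ∧ p.2 ≤ p.1},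
        ENNReal.ofReal (g p.1 p.2) := by
      simp_rw [hB']
      rw [← lintegral_prod _ hpair.aemeasurable, ← Measure.volume_eq_prod,
        lintegral_indicator hS2d]
    rw [e1, e2]
    refine lt_of_le_of_lt (lintegral_mono_set fun p hp => by
      simp only [Set.mem_setOf_eq] at hp ⊢
      exact And.intro hp.1.le hp.2) ?_
    refine lt_of_le_of_lt (lintegral_mono fun p => Real.ofReal_le_enorm _) ?_
    exact hsec_int.2
  have hLHS : (∫ x in Set.Ioi (0:ℝ), ∫ y in Set.Ioc (0:ℝ) x,
        Real.logb 2 ((1 + x) / (1 + y)) * G x y)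
      = (∫⁻ x in Set.Ioi 0, B x).toReal := by
    rw [show (fun x => ∫ y in Set.Ioc (0:ℝ) x, Real.logb 2 ((1 + x) / (1 + y)) * G x y)
        = fun x => (B x).toReal from funext hL1]
    exact integral_toReal hBm.aemeasurable (ae_lt_top hBm hBfin.ne)
  -- Tonelli swaps
  have hswap1 : ∀ x : ℝ, (∫⁻ y, ∫⁻ γ, Φ (x, y, γ)) = ∫⁻ γ, ∫⁻ y, Φ (x, y, γ) := fun x =>
    lintegral_lintegral_swap (hΦm.comp measurable_prodMk_left).aemeasurable
  have hswap3 : ∀ γ : ℝ, (∫⁻ x, ∫⁻ y, Φ (x, y, γ)) = ∫⁻ y, ∫⁻ x, Φ (x, y, γ) := fun γ =>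
    lintegral_lintegral_swap
      (hΦm.comp (measurable_fst.prodMk (measurable_snd.prodMk measurable_const))).aemeasurable
  have hHmeas : Measurable fun p : ℝ × ℝ => ∫⁻ y, Φ (p.1, y, p.2) := by
    have h : Measurable fun q : (ℝ × ℝ) × ℝ => Φ (q.1.1, q.2, q.1.2) :=
      hΦm.comp ((measurable_fst.fst).prodMk ((measurable_snd).prodMk (measurable_fst.snd)))
    exact h.lintegral_prod_right'
  have hswap2 : (∫⁻ x, ∫⁻ γ, ∫⁻ y, Φ (x, y, γ)) = ∫⁻ γ, ∫⁻ x, ∫⁻ y, Φ (x, y, γ) :=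
    lintegral_lintegral_swap hHmeas.aemeasurable
  have hT12 : (∫⁻ x, ∫⁻ y, ∫⁻ γ, Φ (x, y, γ)) = ∫⁻ γ, ∫⁻ y, ∫⁻ x, Φ (x, y, γ) := by
    rw [lintegral_congr hswap1, hswap2, lintegral_congr hswap3]
  -- compare Φ and Φ'
  have hcmp : ∀ γ : ℝ, (∫⁻ y, ∫⁻ x, Φ (x, y, γ)) = ∫⁻ y, ∫⁻ x, Φ' (x, y, γ) := by
    intro γ
    by_cases hγ : 0 < γ
    · have hy_ae : ∀ᵐ y : ℝ, y ∉ ({0, γ} : Set ℝ) :=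
        measure_eq_zero_iff_ae_notMem.mp ((Set.toFinite ({0, γ} : Set ℝ)).measure_zero _)
      refine lintegral_congr_ae (hy_ae.mono fun y hy => ?_)
      dsimp only
      simp only [Set.mem_insert_iff, Set.mem_singleton_iff, not_or] at hy
      rcases lt_or_gt_of_ne hy.1 with hy0 | hy0
      · refine lintegral_congr fun x => ?_
        have hG0 : G x y = 0 := hG_supp x y (Or.inr hy0)
        simp only [hΦdef, hΦ'def, Set.indicator_apply, Set.mem_setOf_eq, hG0, zero_mul,
          ENNReal.ofReal_zero, ite_self]
      · rcases lt_or_gt_of_ne hy.2 with hyγ | hyγ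
        · have e1 : (∫⁻ x, Φ (x, y, γ))
              = ∫⁻ x in Set.Ici γ, ENNReal.ofReal (G x y * (1+γ)⁻¹) := by
            rw [← lintegral_indicator measurableSet_Ici]
            refine lintegral_congr fun x => ?_
            simp only [hΦdef, Set.indicator_apply, Set.mem_setOf_eq, Set.mem_Ici, hy0, hyγ,
              true_and]
          have e2 : (∫⁻ x, Φ' (x, y, γ))
              = ∫⁻ x in Set.Ioi γ, ENNReal.ofReal (G x y * (1+γ)⁻¹) := by
            rw [← lintegral_indicator measurableSet_Ioi]
            refine lintegral_congr fun x => ?_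
            simp only [hΦ'def, Set.indicator_apply, Set.mem_setOf_eq, Set.mem_Ioi, hyγ.le, hγ,
              true_and]
          rw [e1, e2, Measure.restrict_congr_set Ioi_ae_eq_Ici]
        · refine lintegral_congr fun x => ?_
          simp only [hΦdef, hΦ'def]
          rw [Set.indicator_of_notMem
              (by rintro ⟨h1, h2, h3⟩; exact absurd h2 (not_lt.mpr hyγ.le)),
            Set.indicator_of_notMem
              (by rintro ⟨h1, h2, h3⟩; exact absurd h1 (not_le.mpr hyγ))]
    · refine lintegral_congr fun y => ?_
      refine lintegral_congr fun x => ?_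
      simp only [hΦdef, hΦ'def]
      rw [Set.indicator_of_notMem (by rintro ⟨h1, h2, h3⟩; exact hγ (lt_trans h1 h2)),
        Set.indicator_of_notMem (by rintro ⟨h1, h2, h3⟩; exact hγ h2)]
  -- RHS machinery
  set C : ℝ → ℝ → ENNReal := fun γ y => ∫⁻ x in Set.Ioi γ, ENNReal.ofReal (G x y) with hCdef
  set l : ℝ → ENNReal := fun y => ∫⁻ x, ENNReal.ofReal (G x y) with hldef
  set k : ℝ → ℝ → ENNReal := fun γ y => ∫⁻ x in Set.Iic γ, ENNReal.ofReal (G x y) with hkdef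
  have hmeas_slice : ∀ s : Set ℝ, MeasurableSet s →
      Measurable fun y : ℝ => ∫⁻ x in s, ENNReal.ofReal (G x y) := by
    intro s hs
    have h1 : Measurable fun q : ℝ × ℝ => Set.indicator {q : ℝ × ℝ | q.2 ∈ s}
        (fun q => ENNReal.ofReal (G q.2 q.1)) q :=
      (ENNReal.measurable_ofReal.comp
        (hGm.comp (measurable_snd.prodMk measurable_fst))).indicator (measurable_snd hs)
    have h2 := Measurable.lintegral_prod_right' (ν := volume) h1
    have e : ∀ y : ℝ, (∫⁻ x in s, ENNReal.ofReal (G x y))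
        = ∫⁻ x, Set.indicator {q : ℝ × ℝ | q.2 ∈ s}
            (fun q => ENNReal.ofReal (G q.2 q.1)) (y, x) := by
      intro y
      rw [← lintegral_indicator hs]
      exact lintegral_congr fun x => rfl
    simp only [e]
    exact h2
  have hlm : Measurable l := by
    have := hmeas_slice Set.univ MeasurableSet.univ
    simpa [Measure.restrict_univ] using this
  have hCm : ∀ γ, Measurable (C γ) := fun γ => hmeas_slice _ measurableSet_Ioi
  have hkm : ∀ γ, Measurable (k γ) := fun γ => hmeas_slice _ measurableSet_Iic
  have hGof : Measurable fun q : ℝ × ℝ => ENNReal.ofReal (G q.2 q.1) :=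
    ENNReal.measurable_ofReal.comp (hGm.comp (measurable_snd.prodMk measurable_fst))
  have htot : (∫⁻ y, l y) < ⊤ := by
    have hsw : (∫⁻ y, ∫⁻ x, ENNReal.ofReal (G x y)) = ∫⁻ x, ∫⁻ y, ENNReal.ofReal (G x y) :=
      lintegral_lintegral_swap hGof.aemeasurable
    have hpr : (∫⁻ x, ∫⁻ y, ENNReal.ofReal (G x y))
        = ∫⁻ p : ℝ × ℝ, ENNReal.ofReal (G p.1 p.2) := by
      rw [Measure.volume_eq_prod]
      exact (lintegral_prod _ (ENNReal.measurable_ofReal.comp hGm).aemeasurable).symm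
    simp only [hldef]
    rw [hsw, hpr]
    exact lt_of_le_of_lt (lintegral_mono fun p => Real.ofReal_le_enorm _) hG_int.2
  have hsplit : ∀ γ y : ℝ, l y = k γ y + C γ y := by
    intro γ y
    have h := lintegral_add_compl (fun x => ENNReal.ofReal (G x y))
      (measurableSet_Iic (a := γ)) (μ := volume)
    rw [Set.compl_Iic] at h
    exact h.symm
  have hR : ∀ γ : ℝ, 0 < γ → (∫⁻ y, ∫⁻ x, Φ' (x, y, γ))
      = ENNReal.ofReal ((1+γ)⁻¹) * ∫⁻ y in Set.Iic γ, C γ y := by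
    intro γ hγ
    have e : ∀ y : ℝ, (∫⁻ x, Φ' (x, y, γ))
        = Set.indicator (Set.Iic γ) (fun y => ENNReal.ofReal ((1+γ)⁻¹) * C γ y) y := by
      intro y
      by_cases hyγ : y ≤ γ
      · rw [Set.indicator_of_mem (Set.mem_Iic.mpr hyγ)]
        have e1 : (∫⁻ x, Φ' (x, y, γ))
            = ∫⁻ x in Set.Ioi γ, ENNReal.ofReal (G x y * (1+γ)⁻¹) := by
          rw [← lintegral_indicator measurableSet_Ioi]
          refine lintegral_congr fun x => ?_
          simp only [hΦ'def, Set.indicator_apply, Set.mem_setOf_eq, Set.mem_Ioi, hyγ, hγ,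
            true_and]
        rw [e1]
        simp_rw [ENNReal.ofReal_mul (hG_nonneg _ y)]
        rw [lintegral_mul_const' _ _ ENNReal.ofReal_ne_top, hCdef, mul_comm]
      · rw [Set.indicator_of_notMem (fun h => hyγ (Set.mem_Iic.mp h))]
        have hz : ∀ x : ℝ, Φ' (x, y, γ) = 0 := fun x => by
          simp only [hΦ'def]
          exact Set.indicator_of_notMem (by rintro ⟨h1, h2, h3⟩; exact hyγ h1) _
        simp only [hz, lintegral_zero]
    simp only [e]
    rw [lintegral_indicator measurableSet_Iic, lintegral_const_mul' _ _ ENNReal.ofReal_ne_top]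
  have hR0 : ∀ γ : ℝ, ¬ 0 < γ → (∫⁻ y, ∫⁻ x, Φ' (x, y, γ)) = 0 := by
    intro γ hγ
    have hz : ∀ y x : ℝ, Φ' (x, y, γ) = 0 := fun y x => by
      simp only [hΦ'def]
      exact Set.indicator_of_notMem (by rintro ⟨h1, h2, h3⟩; exact hγ h2) _
    simp only [hz, lintegral_zero]
  have hRm : Measurable fun γ : ℝ => ∫⁻ y, ∫⁻ x, Φ' (x, y, γ) := by
    have h1 : Measurable fun q : (ℝ × ℝ) × ℝ => Φ' (q.2, q.1.2, q.1.1) :=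
      hΦ'm.comp (measurable_snd.prodMk ((measurable_fst.snd).prodMk measurable_fst.fst))
    have h3 : Measurable fun q : ℝ × ℝ => ∫⁻ x, Φ' (x, q.2, q.1) := h1.lintegral_prod_right'
    exact h3.lintegral_prod_right'
  have hkey : ∀ γ : ℝ, 0 < γ →
      ((∫ y in Set.Iic γ, ∫ x : ℝ, G x y) - ∫ y in Set.Iic γ, ∫ x in Set.Iic γ, G x y) / (1 + γ)
        = (∫⁻ y, ∫⁻ x, Φ' (x, y, γ)).toReal := by
    intro γ hγ
    have p1 : ∀ y : ℝ, (∫ x : ℝ, G x y) = (l y).toReal := fun y =>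
      integral_eq_lintegral_of_nonneg_ae (Filter.Eventually.of_forall fun x => hG_nonneg x y)
        (hGsec' y).aestronglyMeasurable
    have p2 : ∀ y : ℝ, (∫ x in Set.Iic γ, G x y) = (k γ y).toReal := fun y =>
      integral_eq_lintegral_of_nonneg_ae (Filter.Eventually.of_forall fun x => hG_nonneg x y)
        (hGsec' y).aestronglyMeasurable
    have hfin : ∀ᵐ y : ℝ, l y < ⊤ := ae_lt_top hlm htot.ne
    have hM : (∫ y in Set.Iic γ, ∫ x : ℝ, G x y) = (∫⁻ y in Set.Iic γ, l y).toReal := by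
      simp only [p1]
      exact integral_toReal hlm.aemeasurable (ae_restrict_of_ae hfin)
    have hK : (∫ y in Set.Iic γ, ∫ x in Set.Iic γ, G x y)
        = (∫⁻ y in Set.Iic γ, k γ y).toReal := by
      simp only [p2]
      refine integral_toReal (hkm γ).aemeasurable (ae_restrict_of_ae (hfin.mono fun y hy => ?_))
      refine lt_of_le_of_lt ?_ hy
      rw [hsplit γ y]
      exact le_self_add
    have hsum : (∫⁻ y in Set.Iic γ, l y)
        = (∫⁻ y in Set.Iic γ, k γ y) + ∫⁻ y in Set.Iic γ, C γ y := by
      rw [← lintegral_add_left (hkm γ)]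
      exact lintegral_congr fun y => hsplit γ y
    have hlfin' : (∫⁻ y in Set.Iic γ, l y) < ⊤ :=
      lt_of_le_of_lt (setLIntegral_le_lintegral _ _) htot
    have hkfin : (∫⁻ y in Set.Iic γ, k γ y) < ⊤ := by
      rw [hsum] at hlfin'
      exact lt_of_le_of_lt le_self_add hlfin'
    have hCfin : (∫⁻ y in Set.Iic γ, C γ y) < ⊤ := by
      rw [hsum] at hlfin'
      exact lt_of_le_of_lt le_add_self hlfin'
    rw [hM, hK, hsum, hR γ hγ, ENNReal.toReal_add hkfin.ne hCfin.ne, add_sub_cancel_left,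
      ENNReal.toReal_mul, ENNReal.toReal_ofReal (inv_nonneg.mpr (by linarith)),
      div_eq_mul_inv, mul_comm]
  have hRHS : (∫ γ in Set.Ioi (0:ℝ),
      ((∫ y in Set.Iic γ, ∫ x : ℝ, G x y) - ∫ y in Set.Iic γ, ∫ x in Set.Iic γ, G x y) / (1 + γ))
      = (∫⁻ γ, ∫⁻ y, ∫⁻ x, Φ' (x, y, γ)).toReal := by
    have e1 : (∫ γ in Set.Ioi (0:ℝ),
        ((∫ y in Set.Iic γ, ∫ x : ℝ, G x y) - ∫ y in Set.Iic γ, ∫ x in Set.Iic γ, G x y) / (1 + γ))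
        = ∫ γ in Set.Ioi (0:ℝ), (∫⁻ y, ∫⁻ x, Φ' (x, y, γ)).toReal :=
      integral_congr_ae ((ae_restrict_mem measurableSet_Ioi).mono fun γ hγ => hkey γ hγ)
    have hfinR : ∀ᵐ γ ∂(volume.restrict (Set.Ioi (0:ℝ))), (∫⁻ y, ∫⁻ x, Φ' (x, y, γ)) < ⊤ := by
      refine (ae_restrict_mem measurableSet_Ioi).mono fun γ hγ => ?_
      rw [hR γ hγ]
      calc ENNReal.ofReal ((1+γ)⁻¹) * ∫⁻ y in Set.Iic γ, C γ y
          ≤ 1 * ∫⁻ y, l y := by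
            refine mul_le_mul' (ENNReal.ofReal_le_one.mpr ?_)
              (le_trans (lintegral_mono fun y => ?_) (setLIntegral_le_lintegral _ _))
            · apply inv_le_one_of_one_le₀
              linarith [Set.mem_Ioi.mp hγ]
            · rw [hsplit γ y]
              exact le_add_self
        _ < ⊤ := by rw [one_mul]; exact htot
    rw [e1, integral_toReal hRm.aemeasurable hfinR]
    congr 1
    rw [← lintegral_indicator measurableSet_Ioi]
    refine lintegral_congr fun γ => ?_
    by_cases hγ : γ ∈ Set.Ioi (0:ℝ)
    · rw [Set.indicator_of_mem hγ]
    · rw [Set.indicator_of_notMem hγ, hR0 γ (by simpa using hγ)]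
  -- final assembly
  rw [hLHS, hRHS]
  have hfinal : (∫⁻ γ, ∫⁻ y, ∫⁻ x, Φ' (x, y, γ))
      = ENNReal.ofReal (Real.log 2) * ∫⁻ x in Set.Ioi 0, B x := by
    rw [← lintegral_congr hcmp, ← hT12, hT1]
  rw [hfinal, ENNReal.toReal_mul, ENNReal.toReal_ofReal (Real.log_nonneg one_le_two)]
  have h2 : Real.log 2 ≠ 0 := (Real.log_pos one_lt_two).ne'
  field_simp

/-- Average secrecy capacity identity: if f is the joint density of two nonnegative random
variables (γ_r, γ_e), with joint CDF F and marginal CDF F_e of γ_e, then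
∫_0^∞ ∫_0^{γ_r} log₂((1+γ_r)/(1+γ_e)) f(γ_r,γ_e) dγ_e dγ_r
  = (1/log 2) ∫_0^∞ (F_e(γ) − F(γ,γ))/(1+γ) dγ. -/
theorem average_secrecy_capacity_identity (f : ℝ → ℝ → ℝ)
    (hf_nonneg : ∀ x y, 0 ≤ f x y)
    (hf_supp : ∀ x y, x < 0 ∨ y < 0 → f x y = 0)
    (hf_int : Integrable (fun p : ℝ × ℝ => f p.1 p.2))
    (hf_prob : ∫ p : ℝ × ℝ, f p.1 p.2 = 1)
    (hsec_int : IntegrableOn (fun p : ℝ × ℝ => Real.logb 2 ((1 + p.1) / (1 + p.2)) * f p.1 p.2)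
      {p : ℝ × ℝ | 0 ≤ p.2 ∧ p.2 ≤ p.1}) :
    (∫ γr in Set.Ioi (0:ℝ), ∫ γe in Set.Ioc (0:ℝ) γr,
        Real.logb 2 ((1 + γr) / (1 + γe)) * f γr γe)
      = (1 / Real.log 2) * ∫ γ in Set.Ioi (0:ℝ),
          ((∫ y in Set.Iic γ, ∫ x : ℝ, f x y) - (∫ y in Set.Iic γ, ∫ x in Set.Iic γ, f x y))
            / (1 + γ) := by
  have hfm : AEMeasurable (fun p : ℝ × ℝ => f p.1 p.2) volume := hf_int.aemeasurable
  set F : ℝ × ℝ → ℝ := hfm.mk _ with hFdef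
  have hFmeas : Measurable F := hfm.measurable_mk
  have haeF : (fun p : ℝ × ℝ => f p.1 p.2) =ᵐ[volume] F := hfm.ae_eq_mk
  set G : ℝ → ℝ → ℝ := fun x y => if 0 ≤ x ∧ 0 ≤ y then max (F (x, y)) 0 else 0 with hGdef
  have hGm : Measurable fun p : ℝ × ℝ => G p.1 p.2 := by
    have hset : MeasurableSet {p : ℝ × ℝ | 0 ≤ p.1 ∧ 0 ≤ p.2} := by
      simp only [Set.setOf_and]
      exact (measurableSet_le measurable_const measurable_fst).inter
        (measurableSet_le measurable_const measurable_snd)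
    exact Measurable.ite hset (hFmeas.max measurable_const) measurable_const
  have hGnn : ∀ x y, 0 ≤ G x y := by
    intro x y
    simp only [hGdef]
    split
    · exact le_max_right _ _
    · exact le_refl 0
  have hGsupp : ∀ x y, x < 0 ∨ y < 0 → G x y = 0 := by
    intro x y h
    simp only [hGdef]
    rw [if_neg]
    rintro ⟨h1, h2⟩
    rcases h with h | h <;> linarith
  have hae : (fun p : ℝ × ℝ => f p.1 p.2) =ᵐ[volume] fun p => G p.1 p.2 := by
    filter_upwards [haeF] with p hp
    simp only [hGdef]
    by_cases hc : 0 ≤ p.1 ∧ 0 ≤ p.2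
    · rw [if_pos hc, ← hp, max_eq_left (hf_nonneg _ _)]
    · rw [if_neg hc]
      refine hf_supp p.1 p.2 ?_
      push_neg at hc
      rcases le_or_gt 0 p.1 with h | h
      · exact Or.inr (hc h)
      · exact Or.inl h
  have hG_int : Integrable (fun p : ℝ × ℝ => G p.1 p.2) := hf_int.congr hae
  have hGsec_int : IntegrableOn
      (fun p : ℝ × ℝ => Real.logb 2 ((1 + p.1) / (1 + p.2)) * G p.1 p.2)
      {p : ℝ × ℝ | 0 ≤ p.2 ∧ p.2 ≤ p.1} :=
    hsec_int.congr (ae_restrict_of_ae (hae.mono fun p hp => by simp only [] at hp ⊢; rw [hp]))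
  -- a.e. section equalities
  have hae' : ∀ᵐ z : ℝ × ℝ ∂((volume : Measure ℝ).prod volume), f z.1 z.2 = G z.1 z.2 := by
    rw [← Measure.volume_eq_prod]
    exact hae
  have haeXY : ∀ᵐ x : ℝ, ∀ᵐ y : ℝ, f x y = G x y := Measure.ae_ae_of_ae_prod hae'
  have haeswap : ∀ᵐ w : ℝ × ℝ ∂((volume : Measure ℝ).prod volume), f w.2 w.1 = G w.2 w.1 :=
    (Measure.measurePreserving_swap (μ := (volume : Measure ℝ))
      (ν := (volume : Measure ℝ))).quasiMeasurePreserving.ae hae'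
  have haeYX : ∀ᵐ y : ℝ, ∀ᵐ x : ℝ, f x y = G x y := Measure.ae_ae_of_ae_prod haeswap
  have hLHSeq : (∫ γr in Set.Ioi (0:ℝ), ∫ γe in Set.Ioc (0:ℝ) γr,
        Real.logb 2 ((1 + γr) / (1 + γe)) * f γr γe)
      = ∫ γr in Set.Ioi (0:ℝ), ∫ γe in Set.Ioc (0:ℝ) γr,
        Real.logb 2 ((1 + γr) / (1 + γe)) * G γr γe := by
    refine integral_congr_ae (ae_restrict_of_ae (haeXY.mono fun x hx => ?_))
    refine integral_congr_ae (ae_restrict_of_ae (hx.mono fun y hy => ?_))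
    dsimp only
    rw [hy]
  have hRHS1 : ∀ γ : ℝ, (∫ y in Set.Iic γ, ∫ x : ℝ, f x y)
      = ∫ y in Set.Iic γ, ∫ x : ℝ, G x y := fun γ =>
    integral_congr_ae (ae_restrict_of_ae (haeYX.mono fun y hy => integral_congr_ae hy))
  have hRHS2 : ∀ γ : ℝ, (∫ y in Set.Iic γ, ∫ x in Set.Iic γ, f x y)
      = ∫ y in Set.Iic γ, ∫ x in Set.Iic γ, G x y := fun γ =>
    integral_congr_ae (ae_restrict_of_ae (haeYX.mono fun y hy =>
      integral_congr_ae (ae_restrict_of_ae hy)))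
  rw [hLHSeq, secrecy_main G hGm hGnn hGsupp hG_int hGsec_int]
  congr 1
  refine integral_congr_ae (Filter.Eventually.of_forall fun γ => ?_)
  dsimp only
  rw [hRHS1 γ, hRHS2 γ]
end
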